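/- arXiv:1310.1216 — 13 statements merged into one kernel-verified Lean document; each statement's English description precedes it below -/
import Mathlib

section
/- Let θ > 0 and let f : ℝ → ℝ be C¹ on [0,θ] with f'(x) < 0 for all x ∈ [0,θ] and f(0) > 0 > f(θ), and set Q_c := −f(θ). Then ∫₀^θ dx/(f(x)+A) tends to +∞ as A tends to Q_c from the right (i.e. Tendsto (fun A => ∫₀^θ dx/(f(x)+A)) (𝓝[>] Q_c) atTop). -/
/-!
Write `ε = A + f θ`. Since `f` is antitone, `f x + A ≥ ε > 0` on `[0, θ]`, and since `f` is
differentiable at `θ`, `f x + A ≤ K (θ - x) + ε` on some `[c, θ]`. Hence `δ(A)` is at least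
`∫_c^θ dx / (K (θ - x) + ε) = K⁻¹ log ((K (θ - c) + ε) / ε)`, which diverges as `ε → 0⁺`.
-/

open Filter Set Topology Asymptotics Real MeasureTheory

lemma integral_one_div_mul_sub_add {a b K ε : ℝ} (hab : a ≤ b) (hK : 0 < K) (hε : 0 < ε) :
    ∫ x in a..b, 1 / (K * (b - x) + ε) = K⁻¹ * log ((K * (b - a) + ε) / ε) := by
  have hε_le : ε ≤ K * (b - a) + ε := by nlinarith
  calc ∫ x in a..b, 1 / (K * (b - x) + ε)
      = ∫ x in a..b, (K * b + ε - K * x)⁻¹ := by simp only [one_div, mul_sub, sub_add_eq_add_sub]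
    _ = K⁻¹ * ∫ y in ε..K * (b - a) + ε, y⁻¹ := by
      rw [intervalIntegral.integral_comp_sub_mul (fun y => y⁻¹) hK.ne', smul_eq_mul]; ring_nf
    _ = K⁻¹ * log ((K * (b - a) + ε) / ε) := by
      rw [integral_inv fun h => (hε.trans_le ((uIcc_of_le hε_le) ▸ h).1).false]

lemma tendsto_integral_one_div_mul_sub_add_atTop {a b K : ℝ} (hab : a < b) (hK : 0 < K) :
    Tendsto (fun ε => ∫ x in a..b, 1 / (K * (b - x) + ε)) (𝓝[>] 0) atTop := by
  have hratio : Tendsto (fun ε => (K * (b - a) + ε) / ε) (𝓝[>] 0) atTop := by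
    have : Tendsto (fun ε : ℝ => K * (b - a) * ε⁻¹ + 1) (𝓝[>] 0) atTop :=
      tendsto_atTop_add_const_right _ 1
        (tendsto_inv_nhdsGT_zero.const_mul_atTop (by nlinarith))
    refine this.congr' (eventually_nhdsWithin_of_forall fun ε (hε : 0 < ε) => ?_)
    field_simp
  refine ((tendsto_log_atTop.comp hratio).const_mul_atTop (inv_pos.2 hK)).congr'
    (eventually_nhdsWithin_of_forall fun ε (hε : 0 < ε) => ?_)
  exact (integral_one_div_mul_sub_add hab.le hK hε).symm

lemma intervalIntegrable_one_div_add {g : ℝ → ℝ} {a b ε : ℝ} (hab : a ≤ b)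
    (hg : ContinuousOn g (Icc a b)) (hg0 : ∀ x ∈ Icc a b, 0 ≤ g x) (hε : 0 < ε) :
    IntervalIntegrable (fun x => 1 / (g x + ε)) volume a b := by
  rw [← uIcc_of_le hab] at hg hg0
  exact (continuousOn_const.div (hg.add continuousOn_const) fun x hx =>
    (add_pos_of_nonneg_of_pos (hg0 x hx) hε).ne').intervalIntegrable

lemma tendsto_integral_one_div_add_atTop_of_le {g : ℝ → ℝ} {a b K : ℝ} (hab : a < b)
    (hK : 0 < K) (hg : ContinuousOn g (Icc a b)) (hg0 : ∀ x ∈ Icc a b, 0 ≤ g x)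
    (hgK : ∀ x ∈ Icc a b, g x ≤ K * (b - x)) :
    Tendsto (fun ε => ∫ x in a..b, 1 / (g x + ε)) (𝓝[>] 0) atTop := by
  have hK0 : ∀ x ∈ Icc a b, 0 ≤ K * (b - x) := fun x hx => (hg0 x hx).trans (hgK x hx)
  refine tendsto_atTop_mono' _ ?_ (tendsto_integral_one_div_mul_sub_add_atTop hab hK)
  filter_upwards [self_mem_nhdsWithin] with ε (hε : 0 < ε)
  refine intervalIntegral.integral_mono_on hab.le
    (intervalIntegrable_one_div_add hab.le (by fun_prop) hK0 hε)
    (intervalIntegrable_one_div_add hab.le hg hg0 hε) fun x hx => ?_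
  gcongr
  exacts [add_pos_of_nonneg_of_pos (hg0 x hx) hε, hgK x hx]

lemma tendsto_integral_one_div_add_atTop {g : ℝ → ℝ} {a b : ℝ} (hab : a < b)
    (hg : ContinuousOn g (Icc a b)) (hg0 : ∀ x ∈ Icc a b, 0 ≤ g x)
    (hgb : g =O[𝓝[≤] b] (b - ·)) :
    Tendsto (fun ε => ∫ x in a..b, 1 / (g x + ε)) (𝓝[>] 0) atTop := by
  obtain ⟨K, hK⟩ := hgb.bound
  have hle : ∀ᶠ x in 𝓝[≤] b, g x ≤ max K 1 * (b - x) := by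
    filter_upwards [hK, self_mem_nhdsWithin] with x hx (hxb : x ≤ b)
    rw [norm_of_nonneg (sub_nonneg.2 hxb)] at hx
    calc g x ≤ ‖g x‖ := le_norm_self _
      _ ≤ K * (b - x) := hx
      _ ≤ max K 1 * (b - x) := mul_le_mul_of_nonneg_right (le_max_left _ _) (sub_nonneg.2 hxb)
  obtain ⟨c, hcb, hc⟩ := mem_nhdsLE_iff_exists_Icc_subset.1 hle
  have hsub : Icc (max a c) b ⊆ Icc a b := Icc_subset_Icc_left (le_max_left _ _)
  refine tendsto_atTop_mono' _ ?_ <| tendsto_integral_one_div_add_atTop_of_le (max_lt hab hcb)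
    (lt_max_of_lt_right one_pos) (hg.mono hsub) (fun x hx => hg0 x (hsub hx))
    fun x hx => hc (Icc_subset_Icc_left (le_max_right _ _) hx)
  filter_upwards [self_mem_nhdsWithin] with ε (hε : 0 < ε)
  refine intervalIntegral.integral_mono_interval (le_max_left _ _) (max_lt hab hcb).le le_rfl
    ?_ (intervalIntegrable_one_div_add hab.le hg hg0 hε)
  refine ae_restrict_of_forall_mem measurableSet_Ioc fun x hx => ?_
  have := hg0 x (Ioc_subset_Icc_self hx)
  positivity

theorem time_to_threshold_tendsto_atTop_general (θ : ℝ) (f f' : ℝ → ℝ)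
    (hθ : 0 < θ)
    (hderiv : ∀ x ∈ Set.Icc 0 θ, HasDerivAt f (f' x) x)
    (hf'_neg : ∀ x ∈ Set.Icc 0 θ, f' x < 0) :
    Filter.Tendsto (fun A => ∫ x in (0:ℝ)..θ, 1 / (f x + A))
      (nhdsWithin (-f θ) (Set.Ioi (-f θ))) Filter.atTop := by
  have hθ_mem : θ ∈ Icc 0 θ := right_mem_Icc.2 hθ.le
  have hfc : ContinuousOn f (Icc 0 θ) := fun x hx => (hderiv x hx).continuousAt.continuousWithinAt
  have hanti : AntitoneOn f (Icc 0 θ) :=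
    antitoneOn_of_hasDerivWithinAt_nonpos (convex_Icc 0 θ) hfc
      (fun x hx => (hderiv x (interior_subset hx)).hasDerivWithinAt)
      fun x hx => (hf'_neg x (interior_subset hx)).le
  have hbigO : (f · - f θ) =O[𝓝[≤] θ] (θ - ·) := by
    simpa only [← neg_sub θ, isBigO_neg_right] using
      (hderiv θ hθ_mem).isBigO_sub.mono nhdsWithin_le_nhds
  have hshift : Tendsto (· + f θ) (𝓝[>] (-f θ)) (𝓝[>] 0) := by
    refine tendsto_nhdsWithin_iff.2 ⟨?_, eventually_nhdsWithin_of_forall fun A (hA : -f θ < A) =>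
      show 0 < A + f θ by linarith⟩
    simpa using ((continuous_add_const (f θ)).tendsto (-f θ)).mono_left nhdsWithin_le_nhds
  refine ((tendsto_integral_one_div_add_atTop (g := (f · - f θ)) hθ (hfc.sub continuousOn_const)
    (fun x hx => sub_nonneg.2 (hanti hx hθ_mem hx.2)) hbigO).comp hshift).congr fun A => ?_
  simp only [Function.comp_apply, sub_add_add_cancel]

/-- The time-to-threshold δ(A) = ∫₀^θ dx/(f(x)+A) diverges to +∞ as A → Q_c⁺, where
Q_c = -f(θ) is the critical dose and f is C¹ on [0,θ] with f' < 0 there. -/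
theorem time_to_threshold_tendsto_atTop (θ : ℝ) (f f' : ℝ → ℝ)
    (hθ : 0 < θ)
    (hderiv : ∀ x ∈ Set.Icc 0 θ, HasDerivAt f (f' x) x)
    (hf'_cont : ContinuousOn f' (Set.Icc 0 θ))
    (hf'_neg : ∀ x ∈ Set.Icc 0 θ, f' x < 0)
    (hf0 : 0 < f 0) (hfθ : f θ < 0) :
    Filter.Tendsto (fun A => ∫ x in (0:ℝ)..θ, 1 / (f x + A))
      (nhdsWithin (-f θ) (Set.Ioi (-f θ))) Filter.atTop :=
  time_to_threshold_tendsto_atTop_general θ f f' hθ hderiv hf'_neg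
end

section
/- Let θ > 0 and f : ℝ → ℝ be C¹ on [0,θ] with f'(x) < 0 on [0,θ] and f(0) > 0 > f(θ); set Q_c := −f(θ) and δ(A) := ∫₀^θ dx/(f(x)+A) for A > Q_c. Fix d ∈ (0,1) and an integer n ≥ 1. Suppose (T_k), (A_k), (t_k) are sequences with T_k → +∞, A_k > Q_c, 0 < t_k ≤ δ(A_k), and t_k + (n−1)·δ(A_k) = d·T_k for every k. Then A_k → Q_c. -/
/-- Proposition 1 (integral form): if the spiking part of the T-periodic orbit with n
spikes, consisting of a first passage time t_k ∈ (0, δ(A_k)] plus (n-1) full passages of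
duration δ(A_k) = ∫₀^θ dx/(f(x)+A_k), fills the pulse duration d·T_k, and T_k → ∞, then
the bifurcation amplitudes A_k tend to the critical dose Q_c = -f(θ). -/
theorem bifurcation_amplitudes_tendsto_Qc (θ d : ℝ) (f f' : ℝ → ℝ) (n : ℕ)
    (hθ : 0 < θ)
    (hderiv : ∀ x ∈ Set.Icc 0 θ, HasDerivAt f (f' x) x)
    (hf'_cont : ContinuousOn f' (Set.Icc 0 θ))
    (hf'_neg : ∀ x ∈ Set.Icc 0 θ, f' x < 0)
    (hf0 : 0 < f 0) (hfθ : f θ < 0)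
    (hd : d ∈ Set.Ioo (0:ℝ) 1) (hn : 1 ≤ n)
    (T A t : ℕ → ℝ)
    (hT : Filter.Tendsto T Filter.atTop Filter.atTop)
    (hA : ∀ k, -f θ < A k)
    (ht_pos : ∀ k, 0 < t k)
    (ht_le : ∀ k, t k ≤ ∫ x in (0:ℝ)..θ, 1 / (f x + A k))
    (heq : ∀ k, t k + ((n:ℝ) - 1) * (∫ x in (0:ℝ)..θ, 1 / (f x + A k)) = d * T k) :
    Filter.Tendsto A Filter.atTop (nhds (-f θ)) := by
  obtain ⟨hd0, hd1⟩ := hd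
  have hfc : ContinuousOn f (Set.Icc 0 θ) := fun x hx =>
    (hderiv x hx).continuousAt.continuousWithinAt
  have hanti : StrictAntiOn f (Set.Icc 0 θ) := by
    apply strictAntiOn_of_deriv_neg (convex_Icc 0 θ) hfc
    intro x hx
    rw [interior_Icc] at hx
    rw [(hderiv x (Set.mem_Icc_of_Ioo hx)).deriv]
    exact hf'_neg x (Set.mem_Icc_of_Ioo hx)
  have hθmem : θ ∈ Set.Icc (0:ℝ) θ := Set.right_mem_Icc.2 hθ.le
  have hfx_ge : ∀ x ∈ Set.Icc 0 θ, f θ ≤ f x := by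
    intro x hx
    rcases eq_or_lt_of_le hx.2 with h | h
    · rw [h]
    · exact (hanti hx hθmem h).le
  have hpos : ∀ k, ∀ x ∈ Set.Icc 0 θ, 0 < f x + A k := by
    intro k x hx
    have := hA k
    have := hfx_ge x hx
    linarith
  have hδ_le : ∀ k, (∫ x in (0:ℝ)..θ, 1 / (f x + A k)) ≤ θ * (1 / (f θ + A k)) := by
    intro k
    have hci : IntervalIntegrable (fun x => 1 / (f x + A k)) MeasureTheory.volume 0 θ := by
      apply ContinuousOn.intervalIntegrable
      rw [Set.uIcc_of_le hθ.le]
      exact ContinuousOn.div continuousOn_const (hfc.add continuousOn_const)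
        (fun x hx => (hpos k x hx).ne')
    have hmono := intervalIntegral.integral_mono_on hθ.le hci
      (intervalIntegrable_const (c := 1 / (f θ + A k))) (fun x hx => by
        exact one_div_le_one_div_of_le (hpos k θ hθmem) (by linarith [hfx_ge x hx]))
    simpa using hmono
  have hTd : Filter.Tendsto (fun k => d * T k) Filter.atTop Filter.atTop :=
    hT.const_mul_atTop hd0
  have hub : ∀ᶠ k in Filter.atTop, A k ≤ (n : ℝ) * θ / (d * T k) - f θ := by
    filter_upwards [hTd.eventually_gt_atTop 0] with k hk
    set δk := ∫ x in (0:ℝ)..θ, 1 / (f x + A k) with hδk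
    have hp : 0 < f θ + A k := hpos k θ hθmem
    have hring : (n : ℝ) * δk = δk + ((n : ℝ) - 1) * δk := by ring
    have h1 : d * T k ≤ (n : ℝ) * δk := by
      have := ht_le k
      have := heq k
      linarith
    have hn0 : (0 : ℝ) ≤ (n : ℝ) := Nat.cast_nonneg n
    have h2 : (n : ℝ) * δk ≤ (n : ℝ) * θ / (f θ + A k) := by
      have := mul_le_mul_of_nonneg_left (hδ_le k) hn0
      calc (n : ℝ) * δk ≤ (n : ℝ) * (θ * (1 / (f θ + A k))) := this
        _ = (n : ℝ) * θ / (f θ + A k) := by ring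
    have h3 : d * T k ≤ (n : ℝ) * θ / (f θ + A k) := h1.trans h2
    have h4 : d * T k * (f θ + A k) ≤ (n : ℝ) * θ := (le_div_iff₀ hp).mp h3
    have h5 : f θ + A k ≤ (n : ℝ) * θ / (d * T k) := by
      rw [le_div_iff₀ hk]
      nlinarith
    linarith
  have hlb : ∀ᶠ k in Filter.atTop, -f θ ≤ A k :=
    Filter.Eventually.of_forall fun k => (hA k).le
  have hg : Filter.Tendsto (fun k => (n : ℝ) * θ / (d * T k) - f θ) Filter.atTop
      (nhds (-f θ)) := by
    have h0 : Filter.Tendsto (fun k => (n : ℝ) * θ / (d * T k)) Filter.atTop (nhds 0) :=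
      Filter.Tendsto.div_atTop tendsto_const_nhds hTd
    have := h0.sub_const (f θ)
    simpa using this
  exact tendsto_of_tendsto_of_tendsto_of_le_of_le' tendsto_const_nhds hg hlb hub
end

section
/- Let θ > 0 and f : ℝ → ℝ be C¹ on [0,θ] with f'(x) < 0 on [0,θ] and f(0) > 0 > f(θ), let x̄ ∈ (0,θ) be the unique zero of f, and set Q_c := −f(θ). Fix d ∈ (0,1). Suppose (T_k), (A_k), (x_k) are sequences with T_k → 0⁺ (T_k > 0), A_k > Q_c, x_k ∈ (x̄, θ), satisfying for every k: ∫_{x_k}^θ dx/(f(x)+A_k) = d·T_k and ∫_{x_k}^θ dx/(−f(x)) = (1−d)·T_k. Then A_k → Q_c/d. -/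
/-- Proposition 2(i) (integral form): the border-collision amplitude A_0(d,T) of the
non-spiking T-periodic orbit, characterized by the grazing conditions
∫_{x_k}^θ dx/(f(x)+A_k) = d·T_k and ∫_{x_k}^θ dx/(-f(x)) = (1-d)·T_k, tends to Q_c/d as
T_k → 0⁺, where Q_c = -f(θ) is the critical dose. -/
theorem A0_tendsto_Qc_div_d (θ d : ℝ) (f f' : ℝ → ℝ) (xbar : ℝ)
    (hθ : 0 < θ)
    (hderiv : ∀ s ∈ Set.Icc 0 θ, HasDerivAt f (f' s) s)
    (hf'_cont : ContinuousOn f' (Set.Icc 0 θ))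
    (hf'_neg : ∀ s ∈ Set.Icc 0 θ, f' s < 0)
    (hf0 : 0 < f 0) (hfθ : f θ < 0)
    (hxbar : xbar ∈ Set.Ioo 0 θ) (hfxbar : f xbar = 0)
    (hd : d ∈ Set.Ioo (0:ℝ) 1)
    (T A x : ℕ → ℝ)
    (hT_pos : ∀ k, 0 < T k)
    (hT : Filter.Tendsto T Filter.atTop (nhds 0))
    (hA : ∀ k, -f θ < A k)
    (hx : ∀ k, x k ∈ Set.Ioo xbar θ)
    (heq1 : ∀ k, (∫ s in (x k)..θ, 1 / (f s + A k)) = d * T k)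
    (heq2 : ∀ k, (∫ s in (x k)..θ, 1 / (-f s)) = (1 - d) * T k) :
    Filter.Tendsto A Filter.atTop (nhds (-f θ / d)) := by
  obtain ⟨hd0, hd1⟩ := hd
  obtain ⟨hxb0, hxbθ⟩ := hxbar
  have hQ : 0 < -f θ := by linarith
  have hθmem : θ ∈ Set.Icc 0 θ := ⟨le_of_lt hθ, le_rfl⟩
  have hxbmem : xbar ∈ Set.Icc 0 θ := ⟨le_of_lt hxb0, le_of_lt hxbθ⟩
  have hfc : ContinuousOn f (Set.Icc 0 θ) :=
    fun s hs => ((hderiv s hs).continuousAt).continuousWithinAt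
  have hanti : StrictAntiOn f (Set.Icc 0 θ) := by
    apply strictAntiOn_of_deriv_neg (convex_Icc 0 θ) hfc
    intro s hs
    rw [interior_Icc] at hs
    have hs' : s ∈ Set.Icc 0 θ := Set.mem_Icc_of_Ioo hs
    rw [(hderiv s hs').deriv]
    exact hf'_neg s hs'
  have key : ∀ k, θ - x k ≤ (1 - d) * T k * (-f θ) ∧ -f (x k) / d ≤ A k ∧ A k ≤ -f θ / d := by
    intro k
    set a := x k with ha_def
    obtain ⟨ha1, ha2⟩ := hx k
    have ha0 : 0 < a := lt_trans hxb0 ha1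
    have haθ : a ≤ θ := le_of_lt ha2
    have haI : Set.Icc a θ ⊆ Set.Icc 0 θ := Set.Icc_subset_Icc (le_of_lt ha0) le_rfl
    have hamem : a ∈ Set.Icc 0 θ := ⟨le_of_lt ha0, haθ⟩
    have hfa_neg : f a < 0 := by
      have := hanti hxbmem hamem ha1
      linarith [hfxbar]
    have hfs_lb : ∀ s ∈ Set.Icc a θ, f θ ≤ f s := by
      intro s hs
      rcases eq_or_lt_of_le hs.2 with h | h
      · rw [h]
      · exact le_of_lt (hanti (haI hs) hθmem h)
    have hfs_ub : ∀ s ∈ Set.Icc a θ, f s ≤ f a := by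
      intro s hs
      rcases eq_or_lt_of_le hs.1 with h | h
      · rw [← h]
      · exact le_of_lt (hanti hamem (haI hs) h)
    have hAk := hA k
    have hθA : 0 < f θ + A k := by linarith
    have haA : 0 < f a + A k := by linarith [hfs_lb a ⟨le_rfl, haθ⟩]
    have hden1 : ∀ s ∈ Set.Icc a θ, 0 < f s + A k := fun s hs => by
      have := hfs_lb s hs; linarith
    have hden2 : ∀ s ∈ Set.Icc a θ, 0 < -f s := fun s hs => by
      have := hfs_ub s hs; linarith
    have hfcA : ContinuousOn f (Set.Icc a θ) := hfc.mono haI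
    have hcont1 : ContinuousOn (fun s => 1 / (f s + A k)) (Set.Icc a θ) := by
      apply ContinuousOn.div continuousOn_const (hfcA.add continuousOn_const)
      intro s hs; exact ne_of_gt (hden1 s hs)
    have hcont2 : ContinuousOn (fun s => 1 / (-f s)) (Set.Icc a θ) := by
      apply ContinuousOn.div continuousOn_const hfcA.neg
      intro s hs; exact ne_of_gt (hden2 s hs)
    have hint1 : IntervalIntegrable (fun s => 1 / (f s + A k)) MeasureTheory.volume a θ :=
      hcont1.intervalIntegrable_of_Icc haθ
    have hint2 : IntervalIntegrable (fun s => 1 / (-f s)) MeasureTheory.volume a θ :=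
      hcont2.intervalIntegrable_of_Icc haθ
    -- I1 upper bound
    have hI1_ub : d * T k ≤ (θ - a) * (1 / (f θ + A k)) := by
      rw [← heq1 k]
      have hmono := intervalIntegral.integral_mono_on haθ hint1 intervalIntegrable_const
        (fun s hs => by
          have h2 := hfs_lb s hs
          show (1:ℝ) / (f s + A k) ≤ 1 / (f θ + A k)
          exact one_div_le_one_div_of_le hθA (by linarith))
      rwa [intervalIntegral.integral_const, smul_eq_mul] at hmono
    -- I1 lower bound
    have hI1_lb : (θ - a) * (1 / (f a + A k)) ≤ d * T k := by
      rw [← heq1 k]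
      have hmono := intervalIntegral.integral_mono_on haθ intervalIntegrable_const hint1
        (fun s hs => by
          have h2 := hfs_ub s hs
          show (1:ℝ) / (f a + A k) ≤ 1 / (f s + A k)
          exact one_div_le_one_div_of_le (hden1 s hs) (by linarith))
      rwa [intervalIntegral.integral_const, smul_eq_mul] at hmono
    -- I2 lower bound
    have hI2_lb : (θ - a) * (1 / (-f θ)) ≤ (1 - d) * T k := by
      rw [← heq2 k]
      have hmono := intervalIntegral.integral_mono_on haθ intervalIntegrable_const hint2
        (fun s hs => by
          have h2 := hfs_lb s hs
          show (1:ℝ) / (-f θ) ≤ 1 / (-f s)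
          exact one_div_le_one_div_of_le (hden2 s hs) (by linarith))
      rwa [intervalIntegral.integral_const, smul_eq_mul] at hmono
    -- I2 upper bound
    have hI2_ub : (1 - d) * T k ≤ (θ - a) * (1 / (-f a)) := by
      rw [← heq2 k]
      have hmono := intervalIntegral.integral_mono_on haθ hint2 intervalIntegrable_const
        (fun s hs => by
          have h2 := hfs_ub s hs
          show (1:ℝ) / (-f s) ≤ 1 / (-f a)
          exact one_div_le_one_div_of_le (by linarith : (0:ℝ) < -f a) (by linarith))
      rwa [intervalIntegral.integral_const, smul_eq_mul] at hmono
    have hTk := hT_pos k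
    -- first conclusion
    have c1 : θ - a ≤ (1 - d) * T k * (-f θ) := by
      rw [mul_one_div] at hI2_lb
      exact (div_le_iff₀ hQ).mp hI2_lb
    refine ⟨c1, ?_, ?_⟩
    · -- lower bound on A k
      have h3 : (1 - d) * T k * (-f a) ≤ θ - a := by
        rw [mul_one_div] at hI2_ub
        exact (le_div_iff₀ (by linarith : (0:ℝ) < -f a)).mp hI2_ub
      have h4 : θ - a ≤ d * T k * (f a + A k) := by
        rw [mul_one_div] at hI1_lb
        exact (div_le_iff₀ haA).mp hI1_lb
      have h5 : (1 - d) * (-f a) ≤ d * (f a + A k) := by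
        nlinarith
      rw [div_le_iff₀ hd0]
      nlinarith
    · -- upper bound on A k
      have h3 : d * T k * (f θ + A k) ≤ θ - a := by
        rw [mul_one_div] at hI1_ub
        exact (le_div_iff₀ hθA).mp hI1_ub
      have h5 : d * (f θ + A k) ≤ (1 - d) * (-f θ) := by
        nlinarith
      rw [le_div_iff₀ hd0]
      nlinarith
  -- x k → θ
  have hx_tendsto : Filter.Tendsto x Filter.atTop (nhds θ) := by
    have hlo : ∀ k, θ - (1 - d) * T k * (-f θ) ≤ x k := fun k => by
      have := (key k).1; linarith
    have hup : ∀ k, x k ≤ θ := fun k => le_of_lt (hx k).2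
    have h0 : Filter.Tendsto (fun k => (1 - d) * T k * (-f θ)) Filter.atTop (nhds 0) := by
      have := (hT.const_mul (1 - d)).mul_const (-f θ)
      simpa using this
    have h1 : Filter.Tendsto (fun k => θ - (1 - d) * T k * (-f θ)) Filter.atTop (nhds θ) := by
      have h2 := (tendsto_const_nhds : Filter.Tendsto (fun _ : ℕ => θ) Filter.atTop (nhds θ)).sub h0
      simpa using h2
    exact tendsto_of_tendsto_of_tendsto_of_le_of_le h1 tendsto_const_nhds hlo hup
  have hfx : Filter.Tendsto (fun k => f (x k)) Filter.atTop (nhds (f θ)) :=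
    ((hderiv θ hθmem).continuousAt.tendsto).comp hx_tendsto
  have hlow : Filter.Tendsto (fun k => -f (x k) / d) Filter.atTop (nhds (-f θ / d)) :=
    (hfx.neg).div_const d
  exact tendsto_of_tendsto_of_tendsto_of_le_of_le hlow tendsto_const_nhds
    (fun k => (key k).2.1) (fun k => (key k).2.2)
end

section
/- Let θ > 0 and f : ℝ → ℝ be C¹ on [0,θ] with f'(x) < 0 on [0,θ] and f(0) > 0 > f(θ), let x̄ ∈ (0,θ) be the unique zero of f, and set Q_c := −f(θ). Fix d ∈ (0,1). Suppose (T_k), (A_k), (x_k) are sequences with T_k → 0⁺ (T_k > 0), A_k > Q_c, x_k ∈ [0, x̄], satisfying ∫_{x_k}^θ dx/(f(x)+A_k) ≤ d·T_k for every k. Then A_k → +∞. -/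
/-- Proposition 2(ii) (integral form): if a T-periodic orbit spikes, i.e. travels from
x_k ≤ x̄ to the threshold θ under ẋ = f(x)+A_k within the pulse duration d·T_k (the travel
time being ∫_{x_k}^θ dx/(f(x)+A_k)), and T_k → 0⁺, then the amplitudes A_k tend to +∞. -/
theorem spiking_amplitudes_tendsto_atTop (θ d : ℝ) (f f' : ℝ → ℝ) (xbar : ℝ)
    (hθ : 0 < θ)
    (hderiv : ∀ s ∈ Set.Icc 0 θ, HasDerivAt f (f' s) s)
    (hf'_cont : ContinuousOn f' (Set.Icc 0 θ))
    (hf'_neg : ∀ s ∈ Set.Icc 0 θ, f' s < 0)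
    (hf0 : 0 < f 0) (hfθ : f θ < 0)
    (hxbar : xbar ∈ Set.Ioo 0 θ) (hfxbar : f xbar = 0)
    (hd : d ∈ Set.Ioo (0:ℝ) 1)
    (T A x : ℕ → ℝ)
    (hT_pos : ∀ k, 0 < T k)
    (hT : Filter.Tendsto T Filter.atTop (nhds 0))
    (hA : ∀ k, -f θ < A k)
    (hx : ∀ k, x k ∈ Set.Icc 0 xbar)
    (hle : ∀ k, (∫ s in (x k)..θ, 1 / (f s + A k)) ≤ d * T k) :
    Filter.Tendsto A Filter.atTop Filter.atTop := by
  obtain ⟨hxb0, hxbθ⟩ := hxbar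
  obtain ⟨hd0, hd1⟩ := hd
  have hcontf : ContinuousOn f (Set.Icc 0 θ) := fun s hs =>
    (hderiv s hs).continuousAt.continuousWithinAt
  have hanti : StrictAntiOn f (Set.Icc 0 θ) := by
    apply strictAntiOn_of_deriv_neg (convex_Icc 0 θ) hcontf
    intro s hs
    rw [interior_Icc] at hs
    rw [(hderiv s (Set.mem_Icc_of_Ioo hs)).deriv]
    exact hf'_neg s (Set.mem_Icc_of_Ioo hs)
  have key : ∀ k, (θ - xbar) / (d * T k) ≤ f 0 + A k := by
    intro k
    obtain ⟨hx0, hxxb⟩ := hx k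
    have hxkθ : x k ≤ θ := le_trans hxxb hxbθ.le
    have hmem : ∀ s ∈ Set.Icc (x k) θ, s ∈ Set.Icc (0:ℝ) θ := fun s hs =>
      ⟨le_trans hx0 hs.1, hs.2⟩
    have hfθA : 0 < f θ + A k := by linarith [hA k]
    have hf0A : 0 < f 0 + A k := by linarith [hA k]
    have hpos : ∀ s ∈ Set.Icc (x k) θ, 0 < f s + A k := by
      intro s hs
      have : f θ ≤ f s := (hanti.antitoneOn) (hmem s hs) (Set.right_mem_Icc.2 hθ.le) hs.2
      linarith
    have hub : ∀ s ∈ Set.Icc (x k) θ, f s + A k ≤ f 0 + A k := by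
      intro s hs
      have : f s ≤ f 0 := (hanti.antitoneOn) (Set.left_mem_Icc.2 hθ.le) (hmem s hs) (hmem s hs).1
      linarith
    have hcont : ContinuousOn (fun s => 1 / (f s + A k)) (Set.Icc (x k) θ) := by
      apply ContinuousOn.div continuousOn_const
      · exact (hcontf.mono hmem).add continuousOn_const
      · exact fun s hs => (hpos s hs).ne'
    have hint : IntervalIntegrable (fun s => 1 / (f s + A k)) MeasureTheory.volume (x k) θ := by
      rw [intervalIntegrable_iff_integrableOn_Icc_of_le hxkθ]
      exact hcont.integrableOn_compact isCompact_Icc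
    have hmono : (∫ s in (x k)..θ, 1 / (f 0 + A k)) ≤ ∫ s in (x k)..θ, 1 / (f s + A k) := by
      apply intervalIntegral.integral_mono_on hxkθ intervalIntegrable_const hint
      intro s hs
      exact one_div_le_one_div_of_le (hpos s hs) (hub s hs)
    have hconst : (∫ s in (x k)..θ, 1 / (f 0 + A k)) = (θ - x k) * (1 / (f 0 + A k)) := by
      simp [intervalIntegral.integral_const]
    have h1 : (θ - xbar) * (1 / (f 0 + A k)) ≤ d * T k := by
      have : (θ - xbar) * (1 / (f 0 + A k)) ≤ (θ - x k) * (1 / (f 0 + A k)) := by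
        apply mul_le_mul_of_nonneg_right (by linarith) (by positivity)
      calc (θ - xbar) * (1 / (f 0 + A k)) ≤ (θ - x k) * (1 / (f 0 + A k)) := this
        _ = ∫ s in (x k)..θ, 1 / (f 0 + A k) := hconst.symm
        _ ≤ ∫ s in (x k)..θ, 1 / (f s + A k) := hmono
        _ ≤ d * T k := hle k
    have hdT : 0 < d * T k := mul_pos hd0 (hT_pos k)
    rw [div_le_iff₀ hdT]
    rw [mul_one_div, div_le_iff₀ hf0A] at h1
    linarith [h1]
  have hg : Filter.Tendsto (fun k => (θ - xbar) / (d * T k) - f 0) Filter.atTop Filter.atTop := by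
    apply Filter.tendsto_atTop_add_const_right
    have hdT0 : Filter.Tendsto (fun k => d * T k) Filter.atTop (nhdsWithin 0 (Set.Ioi 0)) := by
      apply tendsto_nhdsWithin_of_tendsto_nhds_of_eventually_within
      · have := hT.const_mul d
        simpa using this
      · exact Filter.Eventually.of_forall fun k => Set.mem_Ioi.2 (mul_pos hd0 (hT_pos k))
    have hinv : Filter.Tendsto (fun k => (d * T k)⁻¹) Filter.atTop Filter.atTop :=
      tendsto_inv_nhdsGT_zero.comp hdT0
    have := Filter.Tendsto.const_mul_atTop (by linarith : (0:ℝ) < θ - xbar) hinv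
    simpa [div_eq_mul_inv] using this
  apply Filter.tendsto_atTop_mono _ hg
  intro k
  have := key k
  linarith
end

section
/- Let θ > 0 and f : ℝ → ℝ be C¹ on [0,θ] with f'(x) < 0 on [0,θ] and f(0) > 0 > f(θ); set Q_c := −f(θ). Fix a ∈ (0,1) and an integer n ≥ 1. For A ∈ (Q_c, Q_c/a) let x_A ∈ (x̄, θ) be the unique point of [0,θ] with f(x_A) = −aA (which exists since −aA ∈ (f(θ), 0)), and define ψ(A) := ∫_{x_A}^θ ( a/f(x) + (1−a)/(f(x)+A) ) dx + n·∫₀^θ (1−a)/(f(x)+A) dx. Then ψ is strictly decreasing (strictly antitone) on (Q_c, Q_c/a). -/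
/-- Key computation in the proof of Lemma 3: the function
ψ(A) = ∫_{x_A}^θ (a/f(x) + (1-a)/(f(x)+A)) dx + n·∫₀^θ (1-a)/(f(x)+A) dx,
where x_A ∈ (x̄,θ) is the unique point with f(x_A) = -aA, is strictly decreasing on
(Q_c, Q_c/a), with Q_c = -f(θ) the critical dose. -/
theorem psi_strictAnti (θ a : ℝ) (f f' : ℝ → ℝ) (xbar : ℝ) (n : ℕ) (χ : ℝ → ℝ)
    (hθ : 0 < θ)
    (hderiv : ∀ x ∈ Set.Icc 0 θ, HasDerivAt f (f' x) x)
    (hf'_cont : ContinuousOn f' (Set.Icc 0 θ))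
    (hf'_neg : ∀ x ∈ Set.Icc 0 θ, f' x < 0)
    (hf0 : 0 < f 0) (hfθ : f θ < 0)
    (hxbar : xbar ∈ Set.Ioo 0 θ) (hfxbar : f xbar = 0)
    (ha : a ∈ Set.Ioo (0:ℝ) 1) (hn : 1 ≤ n)
    (hχ_mem : ∀ A ∈ Set.Ioo (-f θ) ((-f θ) / a), χ A ∈ Set.Ioo xbar θ)
    (hχ_eq : ∀ A ∈ Set.Ioo (-f θ) ((-f θ) / a), f (χ A) = -(a * A)) :
    StrictAntiOn
      (fun A => (∫ x in (χ A)..θ, (a / f x + (1 - a) / (f x + A)))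
        + (n : ℝ) * ∫ x in (0:ℝ)..θ, (1 - a) / (f x + A))
      (Set.Ioo (-f θ) ((-f θ) / a)) := by
  obtain ⟨ha0, ha1⟩ := ha
  -- continuity of f on Icc 0 θ
  have hf_cont : ContinuousOn f (Set.Icc 0 θ) := fun x hx =>
    (hderiv x hx).continuousAt.continuousWithinAt
  -- f strictly antitone on Icc 0 θ
  have hanti : StrictAntiOn f (Set.Icc 0 θ) := by
    apply StrictAntiOn.mono (s := Set.Icc 0 θ) ?_ (le_refl _)
    exact strictAntiOn_of_deriv_neg (convex_Icc 0 θ) hf_cont (fun x hx => by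
      rw [interior_Icc] at hx
      rw [(hderiv x (Set.Ioo_subset_Icc_self hx)).deriv]
      exact hf'_neg x (Set.Ioo_subset_Icc_self hx))
  have hmono : AntitoneOn f (Set.Icc 0 θ) := hanti.antitoneOn
  -- positivity of f x + A on Icc 0 θ for A in the interval
  have hpos : ∀ A ∈ Set.Ioo (-f θ) ((-f θ)/a), ∀ x ∈ Set.Icc 0 θ, 0 < f x + A := by
    intro A hA x hx
    have h1 : f θ ≤ f x := hmono hx (Set.right_mem_Icc.2 hθ.le) hx.2
    have := hA.1
    linarith
  -- A is positive
  have hApos : ∀ A ∈ Set.Ioo (-f θ) ((-f θ)/a), 0 < A := fun A hA =>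
    lt_trans (by linarith) hA.1
  -- f x < 0 on Icc (χ A) θ
  have hfneg : ∀ A ∈ Set.Ioo (-f θ) ((-f θ)/a), ∀ x ∈ Set.Icc (χ A) θ,
      f x ≤ -(a * A) := by
    intro A hA x hx
    have hχm := hχ_mem A hA
    have hχI : χ A ∈ Set.Icc 0 θ :=
      ⟨le_of_lt (lt_trans hxbar.1 hχm.1), hχm.2.le⟩
    have hxI : x ∈ Set.Icc 0 θ := ⟨le_trans hχI.1 hx.1, hx.2⟩
    calc f x ≤ f (χ A) := hmono hχI hxI hx.1
    _ = -(a * A) := hχ_eq A hA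
  intro A₁ hA₁ A₂ hA₂ h12
  set c₁ := χ A₁ with hc₁
  set c₂ := χ A₂ with hc₂
  have hm₁ := hχ_mem A₁ hA₁
  have hm₂ := hχ_mem A₂ hA₂
  have hc₁I : c₁ ∈ Set.Icc 0 θ := ⟨le_of_lt (lt_trans hxbar.1 hm₁.1), hm₁.2.le⟩
  have hc₂I : c₂ ∈ Set.Icc 0 θ := ⟨le_of_lt (lt_trans hxbar.1 hm₂.1), hm₂.2.le⟩
  have hA₁pos := hApos A₁ hA₁
  have hA₂pos := hApos A₂ hA₂
  -- c₁ < c₂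
  have hcc : c₁ < c₂ := by
    by_contra h
    push_neg at h
    have : f c₁ ≤ f c₂ := by
      rcases eq_or_lt_of_le h with h' | h'
      · rw [h']
      · exact (hanti hc₂I hc₁I h').le
    rw [hχ_eq A₁ hA₁, hχ_eq A₂ hA₂] at this
    nlinarith
  -- integrand definitions
  set g₁ : ℝ → ℝ := fun x => a / f x + (1 - a) / (f x + A₁) with hg₁
  set g₂ : ℝ → ℝ := fun x => a / f x + (1 - a) / (f x + A₂) with hg₂
  set h₁ : ℝ → ℝ := fun x => (1 - a) / (f x + A₁) with hh₁
  set h₂ : ℝ → ℝ := fun x => (1 - a) / (f x + A₂) with hh₂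
  -- f nonzero and f + A nonzero facts
  have hfne₁ : ∀ x ∈ Set.Icc c₁ θ, f x ≠ 0 := fun x hx => by
    have := hfneg A₁ hA₁ x hx
    nlinarith
  have hsub : Set.Icc c₁ θ ⊆ Set.Icc 0 θ := Set.Icc_subset_Icc hc₁I.1 le_rfl
  have hfA₁ne : ∀ x ∈ Set.Icc 0 θ, f x + A₁ ≠ 0 := fun x hx =>
    (hpos A₁ hA₁ x hx).ne'
  have hfA₂ne : ∀ x ∈ Set.Icc 0 θ, f x + A₂ ≠ 0 := fun x hx =>
    (hpos A₂ hA₂ x hx).ne'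
  -- continuity of integrands
  have hcg₁ : ContinuousOn g₁ (Set.Icc c₁ θ) := by
    apply ContinuousOn.add
    · exact continuousOn_const.div (hf_cont.mono hsub) hfne₁
    · exact continuousOn_const.div ((hf_cont.mono hsub).add continuousOn_const)
        (fun x hx => hfA₁ne x (hsub hx))
  have hcg₂ : ContinuousOn g₂ (Set.Icc c₁ θ) := by
    apply ContinuousOn.add
    · exact continuousOn_const.div (hf_cont.mono hsub) hfne₁
    · exact continuousOn_const.div ((hf_cont.mono hsub).add continuousOn_const)
        (fun x hx => hfA₂ne x (hsub hx))
  have hch₁ : ContinuousOn h₁ (Set.Icc 0 θ) :=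
    continuousOn_const.div (hf_cont.add continuousOn_const) hfA₁ne
  have hch₂ : ContinuousOn h₂ (Set.Icc 0 θ) :=
    continuousOn_const.div (hf_cont.add continuousOn_const) hfA₂ne
  -- integrability
  have hsub12 : Set.Icc c₁ c₂ ⊆ Set.Icc c₁ θ := Set.Icc_subset_Icc le_rfl hm₂.2.le
  have hsub2θ : Set.Icc c₂ θ ⊆ Set.Icc c₁ θ := Set.Icc_subset_Icc hcc.le le_rfl
  have I1 : IntervalIntegrable g₁ MeasureTheory.volume c₁ c₂ :=
    (hcg₁.mono hsub12).intervalIntegrable_of_Icc hcc.le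
  have I2 : IntervalIntegrable g₁ MeasureTheory.volume c₂ θ :=
    (hcg₁.mono hsub2θ).intervalIntegrable_of_Icc hm₂.2.le
  have I3 : IntervalIntegrable g₂ MeasureTheory.volume c₂ θ :=
    (hcg₂.mono hsub2θ).intervalIntegrable_of_Icc hm₂.2.le
  have I4 : IntervalIntegrable h₁ MeasureTheory.volume 0 θ :=
    hch₁.intervalIntegrable_of_Icc hθ.le
  have I5 : IntervalIntegrable h₂ MeasureTheory.volume 0 θ :=
    hch₂.intervalIntegrable_of_Icc hθ.le
  -- split first integral
  have hsplit : (∫ x in c₁..θ, g₁ x) = (∫ x in c₁..c₂, g₁ x) + ∫ x in c₂..θ, g₁ x :=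
    (intervalIntegral.integral_add_adjacent_intervals I1 I2).symm
  -- E1 : 0 ≤ ∫_{c₁}^{c₂} g₁
  have E1 : 0 ≤ ∫ x in c₁..c₂, g₁ x := by
    apply intervalIntegral.integral_nonneg hcc.le
    intro x hx
    have hxc : x ∈ Set.Icc c₁ θ := hsub12 hx
    have hu : f x ≤ -(a * A₁) := hfneg A₁ hA₁ x hxc
    have hv : 0 < f x + A₁ := hpos A₁ hA₁ x (hsub hxc)
    have hune : f x < 0 := by nlinarith
    have key : g₁ x = (f x + a * A₁) / (f x * (f x + A₁)) := by
      simp only [hg₁]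
      field_simp [hune.ne, hv.ne']
      ring
    rw [key]
    exact div_nonneg_iff.mpr (Or.inr ⟨by linarith, by nlinarith⟩)
  -- E2 : ∫_{c₂}^θ g₂ ≤ ∫_{c₂}^θ g₁
  have E2 : (∫ x in c₂..θ, g₂ x) ≤ ∫ x in c₂..θ, g₁ x := by
    apply intervalIntegral.integral_mono_on hm₂.2.le I3 I2
    intro x hx
    have hv₁ : 0 < f x + A₁ := hpos A₁ hA₁ x (hsub (hsub2θ hx))
    simp only [hg₁, hg₂]
    have : (1 - a) / (f x + A₂) ≤ (1 - a) / (f x + A₁) := by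
      apply div_le_div_of_nonneg_left (by linarith) hv₁ (by linarith)
    linarith
  -- E3 : ∫ h₂ < ∫ h₁
  have E3 : (∫ x in (0:ℝ)..θ, h₂ x) < ∫ x in (0:ℝ)..θ, h₁ x := by
    have hpos' : 0 < ∫ x in (0:ℝ)..θ, (h₁ x - h₂ x) := by
      apply intervalIntegral.intervalIntegral_pos_of_pos_on (I4.sub I5)
      · intro x hx
        have hxI : x ∈ Set.Icc 0 θ := Set.Ioo_subset_Icc_self hx
        have hv₁ : 0 < f x + A₁ := hpos A₁ hA₁ x hxI
        simp only [hh₁, hh₂]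
        have : (1 - a) / (f x + A₂) < (1 - a) / (f x + A₁) := by
          apply div_lt_div_of_pos_left (by linarith) hv₁ (by linarith)
        linarith
      · exact hθ
    rw [intervalIntegral.integral_sub I4 I5] at hpos'
    linarith
  -- conclude
  have hn' : (1:ℝ) ≤ (n:ℝ) := by exact_mod_cast hn
  simp only [hg₁, hg₂, hh₁, hh₂] at hsplit E1 E2 E3
  simp only []
  rw [hsplit]
  have hInt₂nn : 0 ≤ ∫ x in (0:ℝ)..θ, (1 - a) / (f x + A₂) := by
    apply intervalIntegral.integral_nonneg hθ.le
    intro x hx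
    exact div_nonneg (by linarith) (hpos A₂ hA₂ x hx).le
  nlinarith [mul_le_mul_of_nonneg_right hn' hInt₂nn]
end

section
/- Let θ > 0 and f : ℝ → ℝ be C¹ on [0,θ] with f'(x) < 0 on [0,θ] and f(0) > 0 > f(θ); set Q_c := −f(θ). Fix a ∈ (0,1) and an integer n ≥ 1. For A ∈ (Q_c, Q_c/a) let x_A ∈ (x̄, θ) be the unique point of [0,θ] with f(x_A) = −aA, and define ψ(A) := ∫_{x_A}^θ ( a/f(x) + (1−a)/(f(x)+A) ) dx + n·∫₀^θ (1−a)/(f(x)+A) dx. Then ψ(A) > 0 for every A ∈ (Q_c, Q_c/a). -/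
/-- Central claim in the proof of Lemma 3: the function
ψ(A) = ∫_{x_A}^θ (a/f(x) + (1-a)/(f(x)+A)) dx + n·∫₀^θ (1-a)/(f(x)+A) dx,
where x_A ∈ (x̄,θ) is the unique point with f(x_A) = -aA, is strictly positive on
(Q_c, Q_c/a), with Q_c = -f(θ) the critical dose; hence the degeneracy system has no
solution. -/
theorem psi_pos (θ a : ℝ) (f f' : ℝ → ℝ) (xbar : ℝ) (n : ℕ) (χ : ℝ → ℝ)
    (hθ : 0 < θ)
    (hderiv : ∀ x ∈ Set.Icc 0 θ, HasDerivAt f (f' x) x)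
    (hf'_cont : ContinuousOn f' (Set.Icc 0 θ))
    (hf'_neg : ∀ x ∈ Set.Icc 0 θ, f' x < 0)
    (hf0 : 0 < f 0) (hfθ : f θ < 0)
    (hxbar : xbar ∈ Set.Ioo 0 θ) (hfxbar : f xbar = 0)
    (ha : a ∈ Set.Ioo (0:ℝ) 1) (hn : 1 ≤ n)
    (hχ_mem : ∀ A ∈ Set.Ioo (-f θ) ((-f θ) / a), χ A ∈ Set.Ioo xbar θ)
    (hχ_eq : ∀ A ∈ Set.Ioo (-f θ) ((-f θ) / a), f (χ A) = -(a * A)) :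
    ∀ A ∈ Set.Ioo (-f θ) ((-f θ) / a),
      0 < (∫ x in (χ A)..θ, (a / f x + (1 - a) / (f x + A)))
        + (n : ℝ) * ∫ x in (0:ℝ)..θ, (1 - a) / (f x + A) := by
  obtain ⟨ha0, ha1⟩ := ha
  intro A hA
  obtain ⟨hA1, hA2⟩ := hA
  have hQc : 0 < -f θ := by linarith
  have hA0 : 0 < A := lt_trans hQc hA1
  have hcont : ContinuousOn f (Set.Icc 0 θ) := fun x hx =>
    (hderiv x hx).continuousAt.continuousWithinAt
  have hanti : StrictAntiOn f (Set.Icc 0 θ) := by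
    apply strictAntiOn_of_deriv_neg (convex_Icc 0 θ) hcont
    intro x hx
    rw [interior_Icc] at hx
    rw [(hderiv x (Set.mem_Icc_of_Ioo hx)).deriv]
    exact hf'_neg x (Set.mem_Icc_of_Ioo hx)
  have hχ := hχ_mem A ⟨hA1, hA2⟩
  have hfχ := hχ_eq A ⟨hA1, hA2⟩
  have hχmem : χ A ∈ Set.Icc 0 θ := ⟨le_trans hxbar.1.le hχ.1.le, hχ.2.le⟩
  have hfA : ∀ x ∈ Set.Icc 0 θ, 0 < f x + A := by
    intro x hx
    have hle : f θ ≤ f x := by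
      rcases eq_or_lt_of_le hx.2 with h | h
      · rw [h]
      · exact (hanti hx (Set.right_mem_Icc.2 hθ.le) h).le
    linarith
  have hint2 : IntervalIntegrable (fun x => (1 - a) / (f x + A))
      MeasureTheory.volume 0 θ := by
    apply ContinuousOn.intervalIntegrable
    rw [Set.uIcc_of_le hθ.le]
    exact continuousOn_const.div (hcont.add continuousOn_const)
      (fun x hx => (hfA x hx).ne')
  have h2 : 0 < ∫ x in (0:ℝ)..θ, (1 - a) / (f x + A) := by
    apply intervalIntegral.intervalIntegral_pos_of_pos_on hint2 _ hθ
    intro x hx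
    exact div_pos (by linarith) (hfA x ⟨hx.1.le, hx.2.le⟩)
  have haA : 0 < a * A := mul_pos ha0 hA0
  have h1 : 0 ≤ ∫ x in (χ A)..θ, (a / f x + (1 - a) / (f x + A)) := by
    apply intervalIntegral.integral_nonneg hχ.2.le
    intro x hx
    have hx' : x ∈ Set.Icc 0 θ := ⟨le_trans hχmem.1 hx.1, hx.2⟩
    have hfx_le : f x ≤ -(a * A) := by
      rcases eq_or_lt_of_le hx.1 with h | h
      · rw [← h, hfχ]
      · rw [← hfχ]; exact (hanti hχmem hx' h).le
    have hfx_neg : f x < 0 := lt_of_le_of_lt hfx_le (by linarith)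
    have hfxA : 0 < f x + A := hfA x hx'
    have hne1 : f x ≠ 0 := hfx_neg.ne
    have hne2 : f x + A ≠ 0 := hfxA.ne'
    have heq : a / f x + (1 - a) / (f x + A)
        = (f x + a * A) / (f x * (f x + A)) := by
      field_simp
      ring
    rw [heq]
    rw [div_nonneg_iff]
    right
    constructor
    · linarith
    · nlinarith
  have hn' : (1:ℝ) ≤ (n:ℝ) := by exact_mod_cast hn
  nlinarith
end

section
/- Let θ > 0 and f : ℝ → ℝ be C¹ on [0,θ] with f'(x) < 0 on [0,θ] and f(0) > 0 > f(θ); let x̄ ∈ (0,θ) be the unique zero of f and set Q_c := −f(θ). Fix a ∈ (0,1) and an integer n ≥ 1. Let T₁ < T₂ and suppose A : (T₁,T₂) → ℝ and ξ : (T₁,T₂) → ℝ are differentiable with A(T) > Q_c and ξ(T) ∈ (x̄, θ) for all T, and satisfying for every T ∈ (T₁,T₂): (i) ∫_{ξ(T)}^θ dx/(f(x)+A(T)) + n·∫₀^θ dx/(f(x)+A(T)) = a·T, and (ii) ∫_{ξ(T)}^θ dx/(−f(x)) = (1−a)·T. Then A'(T) < 0 for every T ∈ (T₁,T₂). -/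
/-!
Formally differentiating (ii) gives `ξ' = (1 - a) f(ξ)`, and then (i) gives
`A' · P = (1 - a) u / (A - u) - a` with `u = -f(ξ)` and `P > 0` a sum of integrals of
`1 / (f + A)²`; so `A' < 0` amounts to `u < a A`. That inequality follows from (i) and (ii)
alone: on `[ξ, θ]` one has `1 / (-f) ≤ 1 / u` and `1 / (f + A) ≥ 1 / (A - u)`, and `n ≥ 1`.
To avoid differentiating under the integral sign, the same computation is carried out on
difference quotients `T' ↓ T`, with the resolvent identity
`1 / (f + B) - 1 / (f + A) = (A - B) / ((f + B) (f + A))` in place of the chain rule; this bounds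
every right slope of `A` at `T` by one negative constant.
-/

open Set Filter Topology MeasureTheory

lemma mul_le_integral_of_le_on {g : ℝ → ℝ} {p q m : ℝ} (hpq : p ≤ q)
    (hg : IntervalIntegrable g volume p q) (h : ∀ x ∈ Icc p q, m ≤ g x) :
    (q - p) * m ≤ ∫ x in p..q, g x := by
  simpa using intervalIntegral.integral_mono_on hpq intervalIntegrable_const hg h

lemma integral_le_mul_of_le_on {g : ℝ → ℝ} {p q M : ℝ} (hpq : p ≤ q)
    (hg : IntervalIntegrable g volume p q) (h : ∀ x ∈ Icc p q, g x ≤ M) :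
    ∫ x in p..q, g x ≤ (q - p) * M := by
  simpa using intervalIntegral.integral_mono_on hpq hg intervalIntegrable_const h

section

variable {f : ℝ → ℝ} {θ : ℝ}

lemma integral_one_div_add_eq {p q A B : ℝ} (hfc : ContinuousOn f (uIcc p q))
    (hA : ∀ x ∈ uIcc p q, f x + A ≠ 0) (hB : ∀ x ∈ uIcc p q, f x + B ≠ 0) :
    ∫ x in p..q, 1 / (f x + B) =
      (∫ x in p..q, 1 / (f x + A)) + (A - B) * ∫ x in p..q, 1 / ((f x + B) * (f x + A)) := by
  have hfA : ContinuousOn (fun x ↦ f x + A) (uIcc p q) := hfc.add continuousOn_const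
  have hfB : ContinuousOn (fun x ↦ f x + B) (uIcc p q) := hfc.add continuousOn_const
  have hiA : IntervalIntegrable (fun x ↦ 1 / (f x + A)) volume p q :=
    (continuousOn_const.div hfA hA).intervalIntegrable
  have hiAB : IntervalIntegrable (fun x ↦ 1 / ((f x + B) * (f x + A))) volume p q :=
    (continuousOn_const.div (hfB.mul hfA) fun x hx ↦
      mul_ne_zero (hB x hx) (hA x hx)).intervalIntegrable
  rw [← intervalIntegral.integral_const_mul, ← intervalIntegral.integral_add hiA
    (hiAB.const_mul _)]
  refine intervalIntegral.integral_congr fun x hx ↦ ?_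
  have := hA x hx
  have := hB x hx
  field_simp
  ring

lemma continuousOn_one_div_add (hfc : ContinuousOn f (Icc 0 θ)) (hf : AntitoneOn f (Icc 0 θ))
    {A : ℝ} (hA : 0 < f θ + A) : ContinuousOn (fun x ↦ 1 / (f x + A)) (Icc 0 θ) :=
  continuousOn_const.div (hfc.add continuousOn_const) fun _ hx ↦
    (hA.trans_le (by linarith [(hf.mapsTo_Icc hx).1])).ne'

lemma continuousOn_one_div_neg (hfc : ContinuousOn f (Icc 0 θ)) (hf : AntitoneOn f (Icc 0 θ))
    {s : ℝ} (hs : 0 ≤ s) (hfs : f s < 0) : ContinuousOn (fun x ↦ 1 / -f x) (Icc s θ) :=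
  continuousOn_const.div (hfc.mono (Icc_subset_Icc_left hs)).neg fun _ hx ↦
    (neg_pos.2 ((hf ⟨hs, hx.1.trans hx.2⟩ ⟨hs.trans hx.1, hx.2⟩ hx.1).trans_lt hfs)).ne'

theorem neg_lt_mul_of_border_collision (hfc : ContinuousOn f (Icc 0 θ))
    (hf : AntitoneOn f (Icc 0 θ)) {n : ℕ} {a A T s : ℝ} (hs : s ∈ Ico 0 θ) (hfs : f s < 0)
    (hA : 0 < f θ + A) (ha : a < 1) (hn : 1 ≤ n)
    (h₁ : (∫ x in s..θ, 1 / (f x + A)) + n * ∫ x in (0:ℝ)..θ, 1 / (f x + A) = a * T)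
    (h₂ : ∫ x in s..θ, 1 / -f x = (1 - a) * T) :
    -f s < a * A := by
  have hsθ : Icc s θ ⊆ Icc 0 θ := Icc_subset_Icc_left hs.1
  have hfle : ∀ x ∈ Icc s θ, f x ≤ f s := fun x hx ↦ hf (hsθ ⟨le_rfl, hs.2.le⟩) (hsθ hx) hx.1
  have hAs : 0 < f s + A := hA.trans_le (by linarith [(hf.mapsTo_Icc (hsθ ⟨le_rfl, hs.2.le⟩)).1])
  have hg := continuousOn_one_div_add hfc hf hA
  have hgs : IntervalIntegrable (fun x ↦ 1 / (f x + A)) volume s θ :=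
    (hg.mono hsθ).intervalIntegrable_of_Icc hs.2.le
  have hnf : IntervalIntegrable (fun x ↦ 1 / -f x) volume s θ :=
    (continuousOn_one_div_neg hfc hf hs.1 hfs).intervalIntegrable_of_Icc hs.2.le
  have hlow : (θ - s) * (1 / (f s + A)) ≤ ∫ x in s..θ, 1 / (f x + A) :=
    mul_le_integral_of_le_on hs.2.le hgs fun x hx ↦
      one_div_le_one_div_of_le (hA.trans_le (by linarith [(hf.mapsTo_Icc (hsθ hx)).1]))
        (by linarith [hfle x hx])
  have hmono : ∫ x in s..θ, 1 / (f x + A) ≤ ∫ x in (0:ℝ)..θ, 1 / (f x + A) :=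
    intervalIntegral.integral_mono_interval hs.1 hs.2.le le_rfl
      ((ae_restrict_iff' measurableSet_Ioc).2 (ae_of_all _ fun x hx ↦ (one_div_pos.2
        (hA.trans_le (by linarith [(hf.mapsTo_Icc (Ioc_subset_Icc_self hx)).1]))).le))
      (hg.intervalIntegrable_of_Icc (hs.1.trans hs.2.le))
  have hup : (1 - a) * T ≤ (θ - s) * (1 / -f s) :=
    h₂ ▸ integral_le_mul_of_le_on hs.2.le hnf fun x hx ↦
      one_div_le_one_div_of_le (neg_pos.2 hfs) (by linarith [hfle x hx])
  have hT : 0 < T := by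
    have := intervalIntegral.intervalIntegral_pos_of_pos_on hnf (fun x hx ↦ ?_) hs.2
    · nlinarith
    · exact one_div_pos.2 (neg_pos.2 ((hfle x (Ioo_subset_Icc_self hx)).trans_lt hfs))
  have hn' : (1 : ℝ) ≤ n := by exact_mod_cast hn
  have hI : 0 ≤ ∫ x in s..θ, 1 / (f x + A) :=
    (mul_nonneg (by linarith [hs.2]) (by positivity)).trans hlow
  have h2L : 2 * (θ - s) ≤ a * T * (f s + A) := by
    have h2I : 2 * ∫ x in s..θ, 1 / (f x + A) ≤ a * T := by
      rw [← h₁]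
      nlinarith [mul_le_mul hn' hmono hI (Nat.cast_nonneg n)]
    rw [mul_one_div, div_le_iff₀ hAs] at hlow
    nlinarith [mul_le_mul_of_nonneg_right h2I hAs.le]
  have hLu : (1 - a) * T * -f s ≤ θ - s := by
    rwa [mul_one_div, le_div_iff₀ (neg_pos.2 hfs)] at hup
  have : 2 * (1 - a) * -f s ≤ a * (f s + A) := le_of_mul_le_mul_left (by nlinarith) hT
  nlinarith

theorem lt_and_sub_le_of_integral_one_div_neg_eq (hfc : ContinuousOn f (Icc 0 θ))
    (hf : AntitoneOn f (Icc 0 θ)) {s₀ s₁ d : ℝ} (hs₀ : s₀ ∈ Icc 0 θ) (hs₁ : s₁ ∈ Icc 0 θ)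
    (hfs₀ : f s₀ < 0) (hfs₁ : f s₁ < 0) (hd : 0 < d)
    (h : ∫ x in s₁..θ, 1 / -f x = d + ∫ x in s₀..θ, 1 / -f x) :
    s₁ < s₀ ∧ s₀ - s₁ ≤ -f s₀ * d := by
  set m := min s₀ s₁
  have hm : m ∈ Icc 0 θ := ⟨le_min hs₀.1 hs₁.1, min_le_left _ _ |>.trans hs₀.2⟩
  have hneg : ∀ x ∈ Icc m θ, 0 < -f x := fun x hx ↦ neg_pos.2 <|
    (hf hm ⟨hm.1.trans hx.1, hx.2⟩ hx.1).trans_lt (min_rec' (f · < 0) hfs₀ hfs₁)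
  have hc : ContinuousOn (fun x ↦ 1 / -f x) (Icc m θ) :=
    continuousOn_const.div (hfc.mono (Icc_subset_Icc_left hm.1)).neg fun x hx ↦ (hneg x hx).ne'
  have hint : ∀ p ∈ Icc m θ, ∀ q ∈ Icc m θ, IntervalIntegrable (fun x ↦ 1 / -f x) volume p q :=
    fun p hp q hq ↦ (hc.mono (uIcc_subset_Icc hp hq)).intervalIntegrable
  have hs₀m : s₀ ∈ Icc m θ := ⟨min_le_left _ _, hs₀.2⟩
  have hs₁m : s₁ ∈ Icc m θ := ⟨min_le_right _ _, hs₁.2⟩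
  have hθm : θ ∈ Icc m θ := ⟨hm.2, le_rfl⟩
  have hd' : ∫ x in s₁..s₀, 1 / -f x = d := by
    rw [← intervalIntegral.integral_add_adjacent_intervals (hint _ hs₁m _ hs₀m)
      (hint _ hs₀m _ hθm)] at h
    linarith
  have hlt : s₁ < s₀ := by
    by_contra! hle
    have : 0 ≤ ∫ x in s₀..s₁, 1 / -f x := intervalIntegral.integral_nonneg hle fun x hx ↦
      (one_div_pos.2 (hneg x ⟨hs₀m.1.trans hx.1, hx.2.trans hs₁.2⟩)).le
    rw [intervalIntegral.integral_symm] at hd'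
    linarith
  refine ⟨hlt, ?_⟩
  have := mul_le_integral_of_le_on hlt.le (hint _ hs₁m _ hs₀m) fun x hx ↦
    one_div_le_one_div_of_le (hneg x ⟨hs₁m.1.trans hx.1, hx.2.trans hs₀.2⟩)
      (neg_le_neg (hf ⟨hs₁.1.trans hx.1, hx.2.trans hs₀.2⟩ hs₀ hx.2))
  rw [hd', mul_one_div, div_le_iff₀ (neg_pos.2 hfs₀)] at this
  linarith

theorem integral_one_div_add_mul_add_mem_Icc (hfc : ContinuousOn f (Icc 0 θ))
    (hf : AntitoneOn f (Icc 0 θ)) {p A B ε : ℝ} (hp : p ∈ Icc 0 θ) (hε : 0 < ε)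
    (hA : ε ≤ f θ + A) (hB : ε ≤ f θ + B) :
    ∫ x in p..θ, 1 / ((f x + B) * (f x + A)) ∈ Icc 0 (θ / ε ^ 2) := by
  have hpθ : Icc p θ ⊆ Icc 0 θ := Icc_subset_Icc_left hp.1
  have hεA : ∀ x ∈ Icc p θ, ε ≤ f x + A := fun x hx ↦ by linarith [(hf.mapsTo_Icc (hpθ hx)).1]
  have hεB : ∀ x ∈ Icc p θ, ε ≤ f x + B := fun x hx ↦ by linarith [(hf.mapsTo_Icc (hpθ hx)).1]
  have hint : IntervalIntegrable (fun x ↦ 1 / ((f x + B) * (f x + A))) volume p θ :=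
    (continuousOn_const.div (((hfc.mono hpθ).add continuousOn_const).mul
      ((hfc.mono hpθ).add continuousOn_const)) fun x hx ↦
        (mul_pos (hε.trans_le (hεB x hx)) (hε.trans_le (hεA x hx))).ne').intervalIntegrable_of_Icc
      hp.2
  refine ⟨intervalIntegral.integral_nonneg hp.2 fun x hx ↦
    (one_div_pos.2 (mul_pos (hε.trans_le (hεB x hx)) (hε.trans_le (hεA x hx)))).le, ?_⟩
  calc ∫ x in p..θ, 1 / ((f x + B) * (f x + A)) ≤ (θ - p) * (1 / ε ^ 2) :=
        integral_le_mul_of_le_on hp.2 hint fun x hx ↦ one_div_le_one_div_of_le (by positivity)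
          (sq ε ▸ mul_le_mul (hεB x hx) (hεA x hx) hε.le (hε.le.trans (hεB x hx)))
    _ ≤ θ / ε ^ 2 := by rw [mul_one_div]; gcongr; linarith [hp.1]

theorem integral_one_div_add_sub_eq (hfc : ContinuousOn f (Icc 0 θ))
    (hf : AntitoneOn f (Icc 0 θ)) (n : ℕ) {A₀ A₁ s₀ s₁ : ℝ} (hs₀ : s₀ ∈ Icc 0 θ)
    (hs₁ : s₁ ∈ Icc 0 θ) (hA₀ : 0 < f θ + A₀) (hA₁ : 0 < f θ + A₁) :
    ((∫ x in s₁..θ, 1 / (f x + A₁)) + n * ∫ x in (0:ℝ)..θ, 1 / (f x + A₁)) -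
        ((∫ x in s₀..θ, 1 / (f x + A₀)) + n * ∫ x in (0:ℝ)..θ, 1 / (f x + A₀)) =
      (∫ x in s₁..s₀, 1 / (f x + A₀)) + (A₀ - A₁) *
        ((∫ x in s₁..θ, 1 / ((f x + A₁) * (f x + A₀))) +
          n * ∫ x in (0:ℝ)..θ, 1 / ((f x + A₁) * (f x + A₀))) := by
  have hθ : θ ∈ Icc 0 θ := ⟨hs₀.1.trans hs₀.2, le_rfl⟩
  have hpos : ∀ {B}, 0 < f θ + B → ∀ x ∈ uIcc (0 : ℝ) θ, f x + B ≠ 0 := fun hB x hx ↦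
    (hB.trans_le (by linarith [(hf.mapsTo_Icc (uIcc_of_le hθ.1 ▸ hx)).1])).ne'
  have hsplit : ∀ p ∈ Icc 0 θ, ∫ x in p..θ, 1 / (f x + A₁) = (∫ x in p..θ, 1 / (f x + A₀)) +
      (A₀ - A₁) * ∫ x in p..θ, 1 / ((f x + A₁) * (f x + A₀)) := fun p hp ↦
    have hpθ : uIcc p θ ⊆ uIcc 0 θ := uIcc_subset_uIcc (uIcc_of_le hθ.1 ▸ hp) right_mem_uIcc
    integral_one_div_add_eq (hfc.mono (uIcc_subset_Icc hp hθ))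
      (fun x hx ↦ hpos hA₀ x (hpθ hx)) (fun x hx ↦ hpos hA₁ x (hpθ hx))
  have hg := continuousOn_one_div_add hfc hf hA₀
  rw [hsplit s₁ hs₁, hsplit 0 ⟨le_rfl, hθ.1⟩, ← intervalIntegral.integral_add_adjacent_intervals
    ((hg.mono (uIcc_subset_Icc hs₁ hs₀)).intervalIntegrable (μ := volume))
    ((hg.mono (uIcc_subset_Icc hs₀ hθ)).intervalIntegrable (μ := volume))]
  ring

theorem slope_le_of_border_collision (hfc : ContinuousOn f (Icc 0 θ))
    (hf : AntitoneOn f (Icc 0 θ)) {n : ℕ} {a T T' A₀ A₁ s₀ s₁ ε : ℝ}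
    (hs₀ : s₀ ∈ Icc 0 θ) (hs₁ : s₁ ∈ Icc 0 θ) (hfs₀ : f s₀ < 0) (hfs₁ : f s₁ < 0)
    (ha : a < 1) (hT : T < T') (hε : 0 < ε) (hA₀ : ε ≤ f θ + A₀) (hA₁ : ε ≤ f θ + A₁)
    (hkey : -f s₀ < a * A₀)
    (h₁₀ : (∫ x in s₀..θ, 1 / (f x + A₀)) + n * ∫ x in (0:ℝ)..θ, 1 / (f x + A₀) = a * T)
    (h₁₁ : (∫ x in s₁..θ, 1 / (f x + A₁)) + n * ∫ x in (0:ℝ)..θ, 1 / (f x + A₁) = a * T')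
    (h₂₀ : ∫ x in s₀..θ, 1 / -f x = (1 - a) * T) (h₂₁ : ∫ x in s₁..θ, 1 / -f x = (1 - a) * T') :
    (A₁ - A₀) / (T' - T) ≤ -((a * A₀ + f s₀) / (f s₀ + A₀) / ((n + 1) * θ / ε ^ 2)) := by
  have hΔ : 0 < T' - T := sub_pos.2 hT
  obtain ⟨hs, hstep⟩ := lt_and_sub_le_of_integral_one_div_neg_eq hfc hf hs₀ hs₁ hfs₀ hfs₁
    (mul_pos (sub_pos.2 ha) hΔ) (by rw [h₂₀, h₂₁]; ring)
  have hbal := integral_one_div_add_sub_eq hfc hf n hs₀ hs₁ (hε.trans_le hA₀) (hε.trans_le hA₁)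
  rw [h₁₀, h₁₁] at hbal
  set P := (∫ x in s₁..θ, 1 / ((f x + A₁) * (f x + A₀))) +
    n * ∫ x in (0:ℝ)..θ, 1 / ((f x + A₁) * (f x + A₀))
  have hD : 0 < f s₀ + A₀ := hε.trans_le (by linarith [(hf.mapsTo_Icc hs₀).1])
  have hG : (∫ x in s₁..s₀, 1 / (f x + A₀)) * (f s₀ + A₀) ≤ s₀ - s₁ := by
    have hg := (continuousOn_one_div_add hfc hf (hε.trans_le hA₀)).mono
      (Icc_subset_Icc hs₁.1 hs₀.2)
    have := integral_le_mul_of_le_on hs.le (hg.intervalIntegrable_of_Icc hs.le) fun x hx ↦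
      one_div_le_one_div_of_le hD (by linarith [hf ⟨hs₁.1.trans hx.1, hx.2.trans hs₀.2⟩ hs₀ hx.2])
    rwa [mul_one_div, le_div_iff₀ hD] at this
  have hP : 0 ≤ P ∧ P ≤ (n + 1) * θ / ε ^ 2 := by
    obtain ⟨h₁, h₁'⟩ := integral_one_div_add_mul_add_mem_Icc hfc hf hs₁ hε hA₀ hA₁
    obtain ⟨h₀, h₀'⟩ :=
      integral_one_div_add_mul_add_mem_Icc hfc hf ⟨le_rfl, hs₀.1.trans hs₀.2⟩ hε hA₀ hA₁
    have hn : (0 : ℝ) ≤ n := n.cast_nonneg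
    constructor
    · positivity
    · rw [add_mul, add_div, one_mul, mul_div_assoc]
      nlinarith [mul_le_mul_of_nonneg_left h₀' hn]
  -- `hbal`, `hG` and `hstep` give `(A₀ - A₁) P ≥ (a - (1 - a) u / (A₀ - u)) (T' - T)`, `u = -f s₀`
  have hc : (a * A₀ + f s₀) * (T' - T) ≤ (A₀ - A₁) * P * (f s₀ + A₀) := by
    linarith [congrArg (· * (f s₀ + A₀)) hbal]
  have hA : 0 < A₀ - A₁ := by
    by_contra! h
    nlinarith [mul_nonpos_of_nonpos_of_nonneg h hP.1, mul_pos (by linarith : 0 < a * A₀ + f s₀) hΔ]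
  have hC : 0 < (n + 1) * θ / ε ^ 2 := by
    have : 0 < θ := by linarith [hs₁.1, hs₀.2]
    positivity
  rw [div_le_iff₀ hΔ, neg_mul, le_neg, div_div, div_mul_eq_mul_div, div_le_iff₀ (mul_pos hD hC)]
  nlinarith [mul_le_mul_of_nonneg_left hP.2 (mul_pos hA hD).le]

end

theorem left_bifurcation_curve_decreasing_general (θ a T₁ T₂ : ℝ) (f f' : ℝ → ℝ) (xbar : ℝ)
    (n : ℕ) (A ξ : ℝ → ℝ)
    (hderiv : ∀ x ∈ Set.Icc 0 θ, HasDerivAt f (f' x) x)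
    (hf'_neg : ∀ x ∈ Set.Icc 0 θ, f' x < 0)
    (hxbar : xbar ∈ Set.Ioo 0 θ) (hfxbar : f xbar = 0)
    (ha : a ∈ Set.Ioo (0:ℝ) 1) (hn : 1 ≤ n)
    (hA_diff : ∀ T ∈ Set.Ioo T₁ T₂, DifferentiableAt ℝ A T)
    (hA_gt : ∀ T ∈ Set.Ioo T₁ T₂, -f θ < A T)
    (hξ_mem : ∀ T ∈ Set.Ioo T₁ T₂, ξ T ∈ Set.Ioo xbar θ)
    (heq1 : ∀ T ∈ Set.Ioo T₁ T₂,
      (∫ x in (ξ T)..θ, 1 / (f x + A T))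
        + (n : ℝ) * (∫ x in (0:ℝ)..θ, 1 / (f x + A T)) = a * T)
    (heq2 : ∀ T ∈ Set.Ioo T₁ T₂,
      (∫ x in (ξ T)..θ, 1 / (-f x)) = (1 - a) * T) :
    ∀ T ∈ Set.Ioo T₁ T₂, deriv A T < 0 := by
  have hfc : ContinuousOn f (Icc 0 θ) := fun x hx ↦ (hderiv x hx).continuousAt.continuousWithinAt
  have hf : StrictAntiOn f (Icc 0 θ) := strictAntiOn_of_hasDerivWithinAt_neg (convex_Icc 0 θ) hfc
    (fun x hx ↦ (hderiv x (interior_subset hx)).hasDerivWithinAt)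
    (fun x hx ↦ hf'_neg x (interior_subset hx))
  have hξ : ∀ T ∈ Ioo T₁ T₂, ξ T ∈ Icc 0 θ ∧ f (ξ T) < 0 := fun T hT ↦
    have hξT := hξ_mem T hT
    ⟨⟨hxbar.1.le.trans hξT.1.le, hξT.2.le⟩,
      hfxbar ▸ hf (Ioo_subset_Icc_self hxbar) ⟨hxbar.1.le.trans hξT.1.le, hξT.2.le⟩ hξT.1⟩
  intro T hT
  obtain ⟨hs, hfs⟩ := hξ T hT
  have hAT := hA_gt T hT
  set ε := (f θ + A T) / 2 with hεdef
  have hε : 0 < ε := by linarith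
  have hkey := neg_lt_mul_of_border_collision hfc hf.antitoneOn ⟨hs.1, (hξ_mem T hT).2⟩ hfs
    (by linarith) ha.2 hn (heq1 T hT) (heq2 T hT)
  have hrate : 0 < (a * A T + f (ξ T)) / (f (ξ T) + A T) / ((n + 1) * θ / ε ^ 2) := by
    have := (hf.antitoneOn.mapsTo_Icc hs).1
    have := hxbar.1.trans hxbar.2
    exact div_pos (div_pos (by linarith) (by linarith)) (by positivity)
  refine (le_of_tendsto ((hA_diff T hT).hasDerivAt.tendsto_slope.mono_left
    (nhdsGT_le_nhdsNE T)) ?_).trans_lt (neg_neg_of_pos hrate)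
  filter_upwards [Ioo_mem_nhdsGT hT.2, ((hA_diff T hT).continuousAt.eventually_const_lt
    (show A T - ε < A T by linarith)).filter_mono nhdsWithin_le_nhds] with T' hT' hAT'
  have hT'I : T' ∈ Ioo T₁ T₂ := ⟨hT.1.trans hT'.1, hT'.2⟩
  rw [slope_def_field]
  exact slope_le_of_border_collision hfc hf.antitoneOn hs (hξ T' hT'I).1 hfs (hξ T' hT'I).2 ha.2
    hT'.1 hε (by linarith) (by linarith) hkey (heq1 T hT) (heq1 T' hT'I) (heq2 T hT)
    (heq2 T' hT'I)

/-- Lemma 3 (left border collisions): if A(T), ξ(T) are differentiable on (T₁,T₂) and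
satisfy the left border-collision system
∫_{ξ(T)}^θ dx/(f(x)+A(T)) + n·∫₀^θ dx/(f(x)+A(T)) = a·T and
∫_{ξ(T)}^θ dx/(-f(x)) = (1-a)·T,
then A is strictly decreasing: A'(T) < 0 on (T₁,T₂). -/
theorem left_bifurcation_curve_decreasing (θ a T₁ T₂ : ℝ) (f f' : ℝ → ℝ) (xbar : ℝ)
    (n : ℕ) (A ξ : ℝ → ℝ)
    (hθ : 0 < θ)
    (hderiv : ∀ x ∈ Set.Icc 0 θ, HasDerivAt f (f' x) x)
    (hf'_cont : ContinuousOn f' (Set.Icc 0 θ))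
    (hf'_neg : ∀ x ∈ Set.Icc 0 θ, f' x < 0)
    (hf0 : 0 < f 0) (hfθ : f θ < 0)
    (hxbar : xbar ∈ Set.Ioo 0 θ) (hfxbar : f xbar = 0)
    (ha : a ∈ Set.Ioo (0:ℝ) 1) (hn : 1 ≤ n)
    (hT : T₁ < T₂)
    (hA_diff : ∀ T ∈ Set.Ioo T₁ T₂, DifferentiableAt ℝ A T)
    (hξ_diff : ∀ T ∈ Set.Ioo T₁ T₂, DifferentiableAt ℝ ξ T)
    (hA_gt : ∀ T ∈ Set.Ioo T₁ T₂, -f θ < A T)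
    (hξ_mem : ∀ T ∈ Set.Ioo T₁ T₂, ξ T ∈ Set.Ioo xbar θ)
    (heq1 : ∀ T ∈ Set.Ioo T₁ T₂,
      (∫ x in (ξ T)..θ, 1 / (f x + A T))
        + (n : ℝ) * (∫ x in (0:ℝ)..θ, 1 / (f x + A T)) = a * T)
    (heq2 : ∀ T ∈ Set.Ioo T₁ T₂,
      (∫ x in (ξ T)..θ, 1 / (-f x)) = (1 - a) * T) :
    ∀ T ∈ Set.Ioo T₁ T₂, deriv A T < 0 :=
  left_bifurcation_curve_decreasing_general θ a T₁ T₂ f f' xbar n A ξ hderiv hf'_neg hxbar hfxbar ha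
    hn hA_diff hA_gt hξ_mem heq1 heq2
end

section
/- Let a < 0, b ∈ ℝ, θ > 0, Q > 0 and Δ > 0. Then the function T ↦ (Δ/T) / ( (1/a)·Real.log( a·θ/(b + Q·T/Δ) + 1 ) ) tends to Q/θ as T → +∞ (i.e. Tendsto of this function along atTop to 𝓝 (Q/θ)). -/
open Filter Topology Real

/-!
With `D = b + Q T / Δ → ∞`, the firing rate equals `a (Δ/T · D) / (D log (1 + aθ/D))`.
The numerator tends to `a Q`, and the denominator to `a θ` because `x log (1 + t/x) → t`.
-/

/-- Amplitude-correction limit for the linear integrate-and-fire model (Section 5.3):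
with d = Δ/T, A = Q·T/Δ and δ(A) = (1/a)·log(a·θ/(b+A) + 1), the firing-rate d/δ(A)
tends to Q/θ as T → ∞. -/
theorem amplitude_correction_limit (a b θ Q Δ : ℝ)
    (ha : a < 0) (hθ : 0 < θ) (hQ : 0 < Q) (hΔ : 0 < Δ) :
    Filter.Tendsto
      (fun T => (Δ / T) / ((1 / a) * Real.log (a * θ / (b + Q * T / Δ) + 1)))
      Filter.atTop (nhds (Q / θ)) := by
  set D : ℝ → ℝ := fun T => b + Q * T / Δ
  have hD : Tendsto D atTop atTop :=
    tendsto_atTop_add_const_left _ _ <|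
      (tendsto_id.const_mul_atTop (div_pos hQ hΔ)).congr fun T => by simp only [id]; ring
  have hlog : Tendsto (fun T => D T * log (1 + a * θ / D T)) atTop (𝓝 (a * θ)) :=
    (tendsto_mul_log_one_add_div_atTop _).comp hD
  have hscale : Tendsto (fun T => Δ / T * D T) atTop (𝓝 Q) := by
    have : Tendsto (fun T : ℝ => Δ * b / T + Q) atTop (𝓝 (0 + Q)) :=
      (tendsto_const_nhds.div_atTop tendsto_id).add tendsto_const_nhds
    rw [zero_add] at this
    refine this.congr' ?_
    filter_upwards [eventually_ne_atTop 0] with T hT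
    simp only [D]
    field_simp
  have hlim := (hscale.const_mul a).div hlog (mul_ne_zero ha.ne hθ.ne')
  rw [mul_div_mul_left _ _ ha.ne] at hlim
  refine hlim.congr' ?_
  filter_upwards [hD.eventually_ne_atTop 0] with T hT
  change a * (Δ / T * D T) / (D T * log (1 + a * θ / D T)) =
    Δ / T / (1 / a * log (a * θ / D T + 1))
  rw [add_comm _ (1 : ℝ), one_div_mul_eq_div, div_div_eq_mul_div, mul_comm (D T),
    ← mul_assoc, mul_div_mul_right _ _ hT, mul_comm a]
end

section
/- Let θ > 0 and f : ℝ → ℝ be C¹ on [0,θ] with f'(x) < 0 on [0,θ] and f(0) > 0 > f(θ); let x̄ ∈ (0,θ) be the unique zero of f and set Q_c := −f(θ). Fix d ∈ (0,1) and A with Q_c < A < Q_c/d. Then there exist T₀ > 0 and x₀ ∈ (x̄, θ) such that ∫_{x₀}^θ dx/(f(x)+A) = d·T₀ and ∫_{x₀}^θ dx/(−f(x)) = (1−d)·T₀. -/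
/-- Existence of the grazing period T₀ in the conditional-spiking region
Q_c < A < Q_c/d: there are T₀ > 0 and x₀ ∈ (x̄,θ) such that the grazing orbit rises from
x₀ to θ in time d·T₀ under ẋ = f(x)+A and decays back in time (1-d)·T₀ under ẋ = f(x). -/
theorem grazing_period_exists (θ d A : ℝ) (f f' : ℝ → ℝ) (xbar : ℝ)
    (hθ : 0 < θ)
    (hderiv : ∀ x ∈ Set.Icc 0 θ, HasDerivAt f (f' x) x)
    (hf'_cont : ContinuousOn f' (Set.Icc 0 θ))
    (hf'_neg : ∀ x ∈ Set.Icc 0 θ, f' x < 0)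
    (hf0 : 0 < f 0) (hfθ : f θ < 0)
    (hxbar : xbar ∈ Set.Ioo 0 θ) (hfxbar : f xbar = 0)
    (hd : d ∈ Set.Ioo (0:ℝ) 1)
    (hA₁ : -f θ < A) (hA₂ : A < (-f θ) / d) :
    ∃ T₀ > 0, ∃ x₀ ∈ Set.Ioo xbar θ,
      (∫ x in x₀..θ, 1 / (f x + A)) = d * T₀ ∧
      (∫ x in x₀..θ, 1 / (-f x)) = (1 - d) * T₀ := by
  obtain ⟨hxbar0, hxbarθ⟩ := hxbar
  obtain ⟨hd0, hd1⟩ := hd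
  have hfc : ContinuousOn f (Set.Icc 0 θ) :=
    fun x hx => (hderiv x hx).continuousAt.continuousWithinAt
  have anti : StrictAntiOn f (Set.Icc 0 θ) := by
    apply strictAntiOn_of_deriv_neg (convex_Icc 0 θ) hfc
    intro x hx
    rw [interior_Icc] at hx
    rw [(hderiv x (Set.mem_Icc_of_Ioo hx)).deriv]
    exact hf'_neg x (Set.mem_Icc_of_Ioo hx)
  have hfθA : 0 < f θ + A := by linarith
  -- f x + A > 0 on [0,θ]
  have hfposA : ∀ x ∈ Set.Icc 0 θ, 0 < f x + A := by
    intro x hx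
    rcases eq_or_lt_of_le hx.2 with h | h
    · rw [h]; exact hfθA
    · have := anti hx (Set.right_mem_Icc.2 hθ.le) h
      linarith
  -- f x < 0 on (xbar, θ]
  have hfneg : ∀ x ∈ Set.Ioc xbar θ, f x < 0 := by
    intro x hx
    have hxmem : x ∈ Set.Icc 0 θ := ⟨le_trans hxbar0.le hx.1.le, hx.2⟩
    have := anti ⟨hxbar0.le, hxbarθ.le⟩ hxmem hx.1
    linarith [hfxbar]
  -- bound on derivative
  obtain ⟨C, hC⟩ := isCompact_Icc.exists_bound_of_continuousOn hf'_cont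
  set L : ℝ := max C 1 with hLdef
  have hL1 : (1:ℝ) ≤ L := le_max_right _ _
  have hL0 : 0 < L := lt_of_lt_of_le one_pos hL1
  have hLb : ∀ x ∈ Set.Icc 0 θ, -f' x ≤ L := by
    intro x hx
    have := hC x hx
    have h2 := abs_le.1 (by rwa [Real.norm_eq_abs] at this)
    linarith [le_max_left C 1]
  -- MVT bound : -f x ≤ L * (x - xbar) on (xbar, θ]
  have hub : ∀ x ∈ Set.Ioc xbar θ, -f x ≤ L * (x - xbar) := by
    intro x hx
    obtain ⟨c, hc, hceq⟩ := exists_hasDerivAt_eq_slope f f' hx.1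
      (hfc.mono (Set.Icc_subset_Icc hxbar0.le hx.2))
      (fun y hy => hderiv y ⟨le_trans hxbar0.le hy.1.le, le_trans hy.2.le hx.2⟩)
    have hcI : c ∈ Set.Icc 0 θ :=
      ⟨le_trans hxbar0.le hc.1.le, le_trans hc.2.le hx.2⟩
    have hne : x - xbar ≠ 0 := ne_of_gt (by linarith [hx.1])
    rw [eq_div_iff hne] at hceq
    have h1 : f x - f xbar = f' c * (x - xbar) := hceq.symm
    have h2 : -f' c ≤ L := hLb c hcI
    have h3 : 0 ≤ x - xbar := by linarith [hx.1]
    rw [hfxbar] at h1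
    nlinarith
  -- choose x_high near θ where the sign condition holds
  have hdA : d * A < -f θ := by
    rw [lt_div_iff₀ hd0] at hA₂; linarith
  have hφθ : 0 < (1 - d) * (-f θ) - d * (f θ + A) := by nlinarith
  have hφc : ContinuousAt (fun x => (1 - d) * (-f x) - d * (f x + A)) θ := by
    have hfca : ContinuousAt f θ := (hderiv θ (Set.right_mem_Icc.2 hθ.le)).continuousAt
    exact ((continuousAt_const.mul hfca.neg).sub
      (continuousAt_const.mul (hfca.add continuousAt_const)))
  have hev : ∀ᶠ x in nhds θ, 0 < (1 - d) * (-f x) - d * (f x + A) :=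
    hφc.eventually (eventually_gt_nhds hφθ)
  have hev2 : ∀ᶠ x in nhds θ, xbar < x := eventually_gt_nhds hxbarθ
  have hmem : ∀ᶠ x in nhdsWithin θ (Set.Iio θ),
      (0 < (1 - d) * (-f x) - d * (f x + A)) ∧ xbar < x ∧ x < θ := by
    filter_upwards [nhdsWithin_le_nhds hev, nhdsWithin_le_nhds hev2,
      self_mem_nhdsWithin] with x h1 h2 h3
    exact ⟨h1, h2, h3⟩
  obtain ⟨xh, hφxh, hxh1, hxh2⟩ := hmem.exists
  have hxhI : xh ∈ Set.Icc 0 θ := ⟨le_trans hxbar0.le hxh1.le, hxh2.le⟩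
  have hfxh : f xh < 0 := hfneg xh ⟨hxh1, hxh2.le⟩
  have hfxhA : 0 < f xh + A := hfposA xh hxhI
  -- choose x_low
  set M : ℝ := (θ - xbar) / (f θ + A) with hMdef
  have hM0 : 0 ≤ M := div_nonneg (by linarith) hfθA.le
  set K : ℝ := ((1 - d) * M + 1) / d with hKdef
  have hK0 : 0 < K := div_pos (by nlinarith) hd0
  set ε : ℝ := min ((θ - xbar) * Real.exp (-(L * K))) ((xh - xbar) / 2) with hεdef
  have hε0 : 0 < ε := lt_min (mul_pos (by linarith) (Real.exp_pos _)) (by linarith)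
  set xl : ℝ := xbar + ε with hxldef
  have hεle2 : ε ≤ (xh - xbar) / 2 := min_le_right _ _
  have hxlxh : xl < xh := by rw [hxldef]; linarith
  have hxlbar : xbar < xl := by rw [hxldef]; linarith
  have hxlθ : xl < θ := lt_trans hxlxh hxh2
  have hxlI : xl ∈ Set.Icc 0 θ := ⟨by linarith, hxlθ.le⟩
  -- integrands and integrability
  have hg1c : ContinuousOn (fun x => 1 / (f x + A)) (Set.Icc 0 θ) :=
    continuousOn_const.div ((hfc.add continuousOn_const))
      (fun x hx => ne_of_gt (hfposA x hx))
  have hg2c : ∀ a ∈ Set.Ioc xbar θ, ContinuousOn (fun x => 1 / (-f x)) (Set.Icc a θ) := by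
    intro a ha
    refine continuousOn_const.div ((hfc.mono (Set.Icc_subset_Icc (le_trans hxbar0.le ha.1.le) le_rfl)).neg) ?_
    intro x hx
    have : f x < 0 := hfneg x ⟨lt_of_lt_of_le ha.1 hx.1, hx.2⟩
    simp only [ne_eq, neg_eq_zero]
    linarith
  have hint1 : ∀ a ∈ Set.Icc 0 θ, IntervalIntegrable (fun x => 1 / (f x + A)) MeasureTheory.volume a θ :=
    fun a ha => (hg1c.mono (Set.Icc_subset_Icc ha.1 le_rfl)).intervalIntegrable_of_Icc ha.2
  have hint2 : ∀ a ∈ Set.Ioc xbar θ, IntervalIntegrable (fun x => 1 / (-f x)) MeasureTheory.volume a θ :=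
    fun a ha => (hg2c a ha).intervalIntegrable_of_Icc ha.2
  -- lower bound on D(xl)
  have hψc : ContinuousOn (fun x => 1 / (L * (x - xbar))) (Set.Icc xl θ) := by
    refine continuousOn_const.div (continuousOn_const.mul ((continuousOn_id.sub continuousOn_const))) ?_
    intro x hx
    have : 0 < x - xbar := by linarith [hx.1, hxlbar]
    positivity
  have hψint : IntervalIntegrable (fun x => 1 / (L * (x - xbar))) MeasureTheory.volume xl θ :=
    hψc.intervalIntegrable_of_Icc hxlθ.le
  have hDlow : K ≤ ∫ x in xl..θ, 1 / (-f x) := by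
    have hmono : (∫ x in xl..θ, 1 / (L * (x - xbar))) ≤ ∫ x in xl..θ, 1 / (-f x) := by
      apply intervalIntegral.integral_mono_on hxlθ.le hψint (hint2 xl ⟨hxlbar, hxlθ.le⟩)
      intro x hx
      have hx1 : xbar < x := lt_of_lt_of_le hxlbar hx.1
      have hfx : 0 < -f x := by linarith [hfneg x ⟨hx1, hx.2⟩]
      exact one_div_le_one_div_of_le hfx (hub x ⟨hx1, hx.2⟩)
    have hcalc : (∫ x in xl..θ, 1 / (L * (x - xbar))) = L⁻¹ * Real.log ((θ - xbar) / ε) := by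
      have : (fun x => 1 / (L * (x - xbar))) = fun x => L⁻¹ * (x - xbar)⁻¹ := by
        funext x; rw [one_div, mul_inv]
      rw [this, intervalIntegral.integral_const_mul]
      have hcomp : (∫ x in xl..θ, (x - xbar)⁻¹) = ∫ x in (xl - xbar)..(θ - xbar), x⁻¹ :=
        intervalIntegral.integral_comp_sub_right (fun x => x⁻¹) xbar
      rw [hcomp, integral_inv (Set.notMem_uIcc_of_lt (by linarith) (by linarith))]
      have : xl - xbar = ε := by simp [hxldef]
      rw [this]
    rw [hcalc] at hmono
    have hεle : ε ≤ (θ - xbar) * Real.exp (-(L * K)) := min_le_left _ _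
    have hlog : L * K ≤ Real.log ((θ - xbar) / ε) := by
      rw [Real.le_log_iff_exp_le (div_pos (by linarith) hε0)]
      rw [le_div_iff₀ hε0]
      calc Real.exp (L * K) * ε ≤ Real.exp (L * K) * ((θ - xbar) * Real.exp (-(L * K))) :=
            mul_le_mul_of_nonneg_left hεle (Real.exp_pos _).le
        _ = (θ - xbar) * (Real.exp (L * K) * Real.exp (-(L * K))) := by ring
        _ = θ - xbar := by rw [← Real.exp_add]; simp
    have hfin : K ≤ L⁻¹ * Real.log ((θ - xbar) / ε) := by
      have h := mul_le_mul_of_nonneg_left hlog (inv_nonneg.2 hL0.le)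
      rwa [← mul_assoc, inv_mul_cancel₀ (ne_of_gt hL0), one_mul] at h
    linarith
  -- upper bound on R(xl)
  have hRup : (∫ x in xl..θ, 1 / (f x + A)) ≤ M := by
    have hmono : (∫ x in xl..θ, 1 / (f x + A)) ≤ ∫ _x in xl..θ, 1 / (f θ + A) := by
      apply intervalIntegral.integral_mono_on hxlθ.le (hint1 xl hxlI)
        (intervalIntegrable_const)
      intro x hx
      have hxI : x ∈ Set.Icc 0 θ := ⟨le_trans hxlI.1 hx.1, hx.2⟩
      have h1 : f θ + A ≤ f x + A := by
        rcases eq_or_lt_of_le hx.2 with h | h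
        · rw [h]
        · linarith [anti hxI (Set.right_mem_Icc.2 hθ.le) h]
      exact one_div_le_one_div_of_le hfθA h1
    rw [intervalIntegral.integral_const] at hmono
    have : (θ - xl) • (1 / (f θ + A)) ≤ M := by
      rw [smul_eq_mul, hMdef]
      rw [div_eq_mul_one_div (θ - xbar) (f θ + A)]
      apply mul_le_mul_of_nonneg_right (by linarith [hxlbar]) (by positivity)
    linarith
  -- the combined function Φ
  set h : ℝ → ℝ := fun x => (1 - d) * (1 / (f x + A)) - d * (1 / (-f x)) with hhdef
  have hhc : ContinuousOn h (Set.Icc xl θ) :=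
    ((continuousOn_const.mul (hg1c.mono (Set.Icc_subset_Icc hxlI.1 le_rfl))).sub
      (continuousOn_const.mul (hg2c xl ⟨hxlbar, hxlθ.le⟩)))
  have hhint : ∀ a b, xl ≤ a → a ≤ b → b ≤ θ → IntervalIntegrable h MeasureTheory.volume a b :=
    fun a b ha hab hb => (hhc.mono (Set.Icc_subset_Icc ha hb)).intervalIntegrable_of_Icc hab
  set Φ : ℝ → ℝ := fun x => ∫ t in x..θ, h t with hΦdef
  -- split Φ for points in (xbar, θ]
  have hsplit : ∀ a ∈ Set.Ioc xbar θ,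
      Φ a = (1 - d) * (∫ x in a..θ, 1 / (f x + A)) - d * (∫ x in a..θ, 1 / (-f x)) := by
    intro a ha
    have haI : a ∈ Set.Icc 0 θ := ⟨le_trans hxbar0.le ha.1.le, ha.2⟩
    have i1 := hint1 a haI
    have i2 := hint2 a ha
    simp only [hΦdef, hhdef]
    rw [intervalIntegral.integral_sub (i1.const_mul _) (i2.const_mul _),
      intervalIntegral.integral_const_mul, intervalIntegral.integral_const_mul]
  -- Φ xl < 0
  have hΦxl : Φ xl < 0 := by
    rw [hsplit xl ⟨hxlbar, hxlθ.le⟩]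
    have h1 : (1 - d) * (∫ x in xl..θ, 1 / (f x + A)) ≤ (1 - d) * M :=
      mul_le_mul_of_nonneg_left hRup (by linarith)
    have h2 : d * K ≤ d * ∫ x in xl..θ, 1 / (-f x) :=
      mul_le_mul_of_nonneg_left hDlow hd0.le
    have h3 : d * K = (1 - d) * M + 1 := by
      rw [hKdef]; field_simp
    linarith
  -- Φ xh > 0
  have hΦxh : 0 < Φ xh := by
    rw [hsplit xh ⟨hxh1, hxh2.le⟩]
    have hR : (θ - xh) * (1 / (f xh + A)) ≤ ∫ x in xh..θ, 1 / (f x + A) := by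
      have := intervalIntegral.integral_mono_on hxh2.le
        (intervalIntegrable_const (c := 1 / (f xh + A))) (hint1 xh hxhI) ?_
      · rw [intervalIntegral.integral_const, smul_eq_mul] at this; exact this
      · intro x hx
        have hxI : x ∈ Set.Icc 0 θ := ⟨le_trans hxhI.1 hx.1, hx.2⟩
        have : f x + A ≤ f xh + A := by
          rcases eq_or_lt_of_le hx.1 with h | h
          · rw [← h]
          · linarith [anti hxhI hxI h]
        exact one_div_le_one_div_of_le (hfposA x hxI) this
    have hD : (∫ x in xh..θ, 1 / (-f x)) ≤ (θ - xh) * (1 / (-f xh)) := by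
      have := intervalIntegral.integral_mono_on hxh2.le (hint2 xh ⟨hxh1, hxh2.le⟩)
        (intervalIntegrable_const (c := 1 / (-f xh))) ?_
      · rw [intervalIntegral.integral_const, smul_eq_mul] at this; exact this
      · intro x hx
        have hxI : x ∈ Set.Icc 0 θ := ⟨le_trans hxhI.1 hx.1, hx.2⟩
        have hfx : f x < 0 := hfneg x ⟨lt_of_lt_of_le hxh1 hx.1, hx.2⟩
        have : -f xh ≤ -f x := by
          rcases eq_or_lt_of_le hx.1 with h | h
          · rw [← h]
          · linarith [anti hxhI hxI h]
        exact one_div_le_one_div_of_le (by linarith) this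
    have hfxhn : 0 < -f xh := by linarith
    have hbr2 : d * (1 / (-f xh)) < (1 - d) * (1 / (f xh + A)) := by
      rw [mul_one_div, mul_one_div, div_lt_div_iff₀ hfxhn hfxhA]
      linarith [hφxh]
    have hθxh : 0 < θ - xh := by linarith
    have e1 := mul_lt_mul_of_pos_left hbr2 hθxh
    have e2 := mul_le_mul_of_nonneg_left hR (by linarith : (0:ℝ) ≤ 1 - d)
    have e3 := mul_le_mul_of_nonneg_left hD hd0.le
    linarith only [e1, e2, e3]
  -- continuity of Φ on [xl, xh]
  have hΦcont : ContinuousOn Φ (Set.Icc xl xh) := by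
    have hprim : ContinuousOn (fun x => ∫ t in xl..x, h t) (Set.Icc xl θ) := by
      have := intervalIntegral.continuousOn_primitive_interval
        (f := h) (a := xl) (b := θ) (μ := MeasureTheory.volume) ?_
      · rwa [Set.uIcc_of_le hxlθ.le] at this
      · rw [Set.uIcc_of_le hxlθ.le]
        exact hhc.integrableOn_Icc
    have heq : ∀ x ∈ Set.Icc xl xh, Φ x = (∫ t in xl..θ, h t) - ∫ t in xl..x, h t := by
      intro x hx
      have : (∫ t in xl..x, h t) + ∫ t in x..θ, h t = ∫ t in xl..θ, h t :=
        intervalIntegral.integral_add_adjacent_intervals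
          (hhint xl x le_rfl hx.1 (by linarith [hx.2]))
          (hhint x θ hx.1 (by linarith [hx.2]) le_rfl)
      simp only [hΦdef]; linarith
    apply ContinuousOn.congr (f := fun x => (∫ t in xl..θ, h t) - ∫ t in xl..x, h t)
    · exact continuousOn_const.sub (hprim.mono (Set.Icc_subset_Icc le_rfl hxh2.le))
    · exact heq
  -- IVT
  have hIVT := intermediate_value_Icc hxlxh.le hΦcont
  have h0mem : (0:ℝ) ∈ Set.Icc (Φ xl) (Φ xh) := ⟨hΦxl.le, hΦxh.le⟩
  obtain ⟨x₀, hx₀mem, hΦ0⟩ := hIVT h0mem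
  have hx₀bar : xbar < x₀ := lt_of_lt_of_le hxlbar hx₀mem.1
  have hx₀θ : x₀ < θ := lt_of_le_of_lt hx₀mem.2 hxh2
  have hx₀I : x₀ ∈ Set.Icc 0 θ := ⟨le_trans hxbar0.le hx₀bar.le, hx₀θ.le⟩
  -- positivity of R(x₀)
  have hRpos : 0 < ∫ x in x₀..θ, 1 / (f x + A) := by
    apply intervalIntegral.intervalIntegral_pos_of_pos_on (hint1 x₀ hx₀I) _ hx₀θ
    intro x hx
    have hxI : x ∈ Set.Icc 0 θ := ⟨le_trans hx₀I.1 hx.1.le, hx.2.le⟩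
    have := hfposA x hxI
    positivity
  set R : ℝ := ∫ x in x₀..θ, 1 / (f x + A) with hRdef
  set D : ℝ := ∫ x in x₀..θ, 1 / (-f x) with hDdef
  have hkey : (1 - d) * R - d * D = 0 := by
    rw [← hsplit x₀ ⟨hx₀bar, hx₀θ.le⟩]; exact hΦ0
  refine ⟨R / d, div_pos hRpos hd0, x₀, ⟨hx₀bar, hx₀θ⟩, ?_, ?_⟩
  · rw [← hRdef]; field_simp
  · rw [← hDdef]
    have hd0' : d ≠ 0 := ne_of_gt hd0
    field_simp
    linarith only [hkey]
end

section
/- Let δ > 0, t̄ < δ, and let (t_n)_{n≥1} be a sequence of positive real numbers such that t_n → t̄ and n·(t_n − t_{n+1}) → 0 as n → ∞. Then there exists N such that for all n ≥ N: n/(t_n + (n−1)·δ) > (n+1)/(t_{n+1} + n·δ). -/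
/-- Quantitative core of Proposition 5: if t_n → t̄ < δ and n·(t_n − t_{n+1}) → 0, then
the firing-rates n/(t_n + (n−1)δ) at the right border collisions form an eventually
strictly decreasing sequence. -/
theorem firing_rates_eventually_decreasing (δ tbar : ℝ) (t : ℕ → ℝ)
    (hδ : 0 < δ) (htbar : tbar < δ)
    (hpos : ∀ n ≥ 1, 0 < t n)
    (hlim : Filter.Tendsto t Filter.atTop (nhds tbar))
    (hlim2 : Filter.Tendsto (fun (n : ℕ) => (n : ℝ) * (t n - t (n + 1)))
      Filter.atTop (nhds 0)) :
    ∃ N : ℕ, ∀ n ≥ N,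
      (n : ℝ) / (t n + ((n : ℝ) - 1) * δ) > ((n : ℝ) + 1) / (t (n + 1) + (n : ℝ) * δ) := by
  have hε : (0:ℝ) < (δ - tbar) / 2 := by linarith
  have h1 := hlim.eventually (eventually_lt_nhds (show tbar < (δ + tbar)/2 by linarith))
  have h2 := hlim2.eventually (eventually_lt_nhds hε)
  obtain ⟨N1, hN1⟩ := Filter.eventually_atTop.mp h1
  obtain ⟨N2, hN2⟩ := Filter.eventually_atTop.mp h2
  refine ⟨max 1 (max N1 N2), fun n hn => ?_⟩
  have hn1 : 1 ≤ n := le_trans (le_max_left _ _) hn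
  have hnN1 : N1 ≤ n := le_trans (le_trans (le_max_left _ _) (le_max_right _ _)) hn
  have hnN2 : N2 ≤ n := le_trans (le_trans (le_max_right _ _) (le_max_right _ _)) hn
  have ht := hN1 n hnN1
  have hg := hN2 n hnN2
  have hnR : (1:ℝ) ≤ (n:ℝ) := by exact_mod_cast hn1
  have ha : 0 < t n + ((n:ℝ) - 1) * δ := by
    have := hpos n hn1
    nlinarith
  have hb : 0 < t (n + 1) + (n:ℝ) * δ := by
    have := hpos (n+1) (by omega)
    nlinarith
  rw [gt_iff_lt, div_lt_div_iff₀ hb ha]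
  nlinarith [hg, ht, hnR]
end

section
/- Let θ > 0 and f : ℝ → ℝ be C¹ on [0,θ] with f'(x) < 0 on [0,θ] and f(0) > 0 > f(θ); let x̄ ∈ (0,θ) be the unique zero of f, fix d ∈ (0,1) and A > Q_c := −f(θ), and set δ := ∫₀^θ dx/(f(x)+A). Suppose for each integer n ≥ 1 there are x_n ∈ (0, x̄), y_n ∈ (x̄, θ) and T_n^R, T_n^L > 0 satisfying: ∫_{x_n}^θ dx/(f(x)+A) + (n−1)·δ = d·T_n^R and ∫₀^{x_n} dx/f(x) = (1−d)·T_n^R; ∫_{y_n}^θ dx/(f(x)+A) + n·δ = d·T_n^L and ∫_{y_n}^θ dx/(−f(x)) = (1−d)·T_n^L. Then T_n^L − T_n^R → δ/d and T_{n+1}^R − T_n^L → 0 as n → ∞. -/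
open MeasureTheory Filter Set intervalIntegral

/-- Step structure of the devil's staircase (proof of Proposition 4): the widths of the
steps [T_n^R, T_n^L] stabilize at δ/d and the gaps T_{n+1}^R − T_n^L between consecutive
steps close as n → ∞, where δ = ∫₀^θ dx/(f(x)+A). -/
theorem staircase_step_structure (θ d A : ℝ) (f f' : ℝ → ℝ) (xbar : ℝ)
    (x y TR TL : ℕ → ℝ)
    (hθ : 0 < θ)
    (hderiv : ∀ s ∈ Set.Icc 0 θ, HasDerivAt f (f' s) s)
    (hf'_cont : ContinuousOn f' (Set.Icc 0 θ))
    (hf'_neg : ∀ s ∈ Set.Icc 0 θ, f' s < 0)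
    (hf0 : 0 < f 0) (hfθ : f θ < 0)
    (hxbar : xbar ∈ Set.Ioo 0 θ) (hfxbar : f xbar = 0)
    (hd : d ∈ Set.Ioo (0:ℝ) 1) (hA : -f θ < A)
    (hx : ∀ n ≥ 1, x n ∈ Set.Ioo 0 xbar)
    (hy : ∀ n ≥ 1, y n ∈ Set.Ioo xbar θ)
    (hTR : ∀ n ≥ 1, 0 < TR n) (hTL : ∀ n ≥ 1, 0 < TL n)
    (heqR1 : ∀ n ≥ 1, (∫ s in (x n)..θ, 1 / (f s + A))
      + ((n : ℝ) - 1) * (∫ s in (0:ℝ)..θ, 1 / (f s + A)) = d * TR n)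
    (heqR2 : ∀ n ≥ 1, (∫ s in (0:ℝ)..(x n), 1 / f s) = (1 - d) * TR n)
    (heqL1 : ∀ n ≥ 1, (∫ s in (y n)..θ, 1 / (f s + A))
      + (n : ℝ) * (∫ s in (0:ℝ)..θ, 1 / (f s + A)) = d * TL n)
    (heqL2 : ∀ n ≥ 1, (∫ s in (y n)..θ, 1 / (-f s)) = (1 - d) * TL n) :
    Filter.Tendsto (fun n => TL n - TR n) Filter.atTop
      (nhds ((∫ s in (0:ℝ)..θ, 1 / (f s + A)) / d)) ∧
    Filter.Tendsto (fun n => TR (n + 1) - TL n) Filter.atTop (nhds 0) := by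
  obtain ⟨hd0, hd1⟩ := hd
  obtain ⟨hxb0, hxbθ⟩ := hxbar
  set δ := ∫ s in (0:ℝ)..θ, 1 / (f s + A) with hδdef
  have hfc : ContinuousOn f (Set.Icc 0 θ) :=
    fun s hs => (hderiv s hs).continuousAt.continuousWithinAt
  have hanti : StrictAntiOn f (Set.Icc 0 θ) := by
    apply strictAntiOn_of_deriv_neg (convex_Icc 0 θ) hfc
    intro s hs
    rw [interior_Icc] at hs
    rw [(hderiv s (Set.mem_Icc_of_Ioo hs)).deriv]
    exact hf'_neg s (Set.mem_Icc_of_Ioo hs)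
  have hfθA : 0 < f θ + A := by linarith
  -- f s + A ≥ f θ + A on [0, θ]
  have hfA : ∀ s ∈ Set.Icc 0 θ, f θ + A ≤ f s + A := by
    intro s hs
    rcases eq_or_lt_of_le hs.2 with h | h
    · rw [h]
    · have := hanti hs (Set.right_mem_Icc.2 hθ.le) h
      linarith
  have hApos : ∀ s ∈ Set.Icc 0 θ, 0 < f s + A := fun s hs => lt_of_lt_of_le hfθA (hfA s hs)
  have hcontA : ContinuousOn (fun s => 1 / (f s + A)) (Set.Icc 0 θ) :=
    ContinuousOn.div continuousOn_const (hfc.add continuousOn_const)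
      (fun s hs => ne_of_gt (hApos s hs))
  have hintA : ∀ a b, 0 ≤ a → a ≤ b → b ≤ θ →
      IntervalIntegrable (fun s => 1 / (f s + A)) volume a b := by
    intro a b ha hab hb
    apply (hcontA.mono ?_).intervalIntegrable
    rw [Set.uIcc_of_le hab]
    exact Set.Icc_subset_Icc ha hb
  have hδpos : 0 < δ := by
    apply intervalIntegral.intervalIntegral_pos_of_pos_on
      (hintA 0 θ le_rfl hθ.le le_rfl) ?_ hθ
    intro s hs
    exact one_div_pos.2 (hApos s (Set.mem_Icc_of_Ioo hs))
  have hAnonneg : ∀ a b, 0 ≤ a → a ≤ b → b ≤ θ →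
      0 ≤ ∫ s in a..b, 1 / (f s + A) := by
    intro a b ha hab hb
    apply intervalIntegral.integral_nonneg hab
    intro u hu
    exact le_of_lt (one_div_pos.2 (hApos u ⟨le_trans ha hu.1, le_trans hu.2 hb⟩))
  -- upper bound by constant
  set C := 1 / (f θ + A) with hCdef
  have hAub : ∀ a b, 0 ≤ a → a ≤ b → b ≤ θ →
      (∫ s in a..b, 1 / (f s + A)) ≤ C * (b - a) := by
    intro a b ha hab hb
    have h1 : (∫ s in a..b, 1 / (f s + A)) ≤ ∫ _ in a..b, C := by
      apply intervalIntegral.integral_mono_on hab (hintA a b ha hab hb)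
        intervalIntegrable_const
      intro u hu
      exact one_div_le_one_div_of_le hfθA (hfA u ⟨le_trans ha hu.1, le_trans hu.2 hb⟩)
    rw [intervalIntegral.integral_const, smul_eq_mul] at h1
    linarith
  -- positivity of f on [0, xbar)
  have hfpos : ∀ s, 0 ≤ s → s < xbar → 0 < f s := by
    intro s h0 h1
    have := hanti ⟨h0, le_of_lt (h1.trans hxbθ)⟩ ⟨hxb0.le, hxbθ.le⟩ h1
    rw [hfxbar] at this
    exact this
  have hfneg : ∀ s, xbar < s → s ≤ θ → f s < 0 := by
    intro s h1 h2
    have := hanti ⟨hxb0.le, hxbθ.le⟩ ⟨le_trans hxb0.le h1.le, h2⟩ h1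
    rw [hfxbar] at this
    exact this
  -- integrability of 1/f on [a,b] ⊂ [0, xbar)
  have hint_f : ∀ a b, 0 ≤ a → a ≤ b → b < xbar →
      IntervalIntegrable (fun s => 1 / f s) volume a b := by
    intro a b ha hab hb
    apply ContinuousOn.intervalIntegrable
    apply ContinuousOn.div continuousOn_const
    · apply hfc.mono
      rw [Set.uIcc_of_le hab]
      exact Set.Icc_subset_Icc ha (le_of_lt (hb.trans hxbθ))
    · intro u hu
      rw [Set.uIcc_of_le hab] at hu
      exact ne_of_gt (hfpos u (le_trans ha hu.1) (lt_of_le_of_lt hu.2 hb))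
  have hint_nf : ∀ a b, xbar < a → a ≤ b → b ≤ θ →
      IntervalIntegrable (fun s => 1 / (-f s)) volume a b := by
    intro a b ha hab hb
    apply ContinuousOn.intervalIntegrable
    apply ContinuousOn.div continuousOn_const
    · apply ContinuousOn.neg
      apply hfc.mono
      rw [Set.uIcc_of_le hab]
      exact Set.Icc_subset_Icc (le_trans hxb0.le ha.le) hb
    · intro u hu
      rw [Set.uIcc_of_le hab] at hu
      have := hfneg u (lt_of_lt_of_le ha hu.1) (le_trans hu.2 hb)
      simpa using ne_of_gt (neg_pos.2 this)
  -- TR n → ∞ and TL n → ∞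
  have hTRtop : Tendsto TR atTop atTop := by
    apply tendsto_atTop_mono' atTop
      (show ∀ᶠ n : ℕ in atTop, ((n : ℝ) - 1) * δ / d ≤ TR n from ?_) ?_
    · filter_upwards [eventually_ge_atTop 1] with n hn
      have h1 := heqR1 n hn
      have hxn := hx n hn
      have h2 : 0 ≤ ∫ s in (x n)..θ, 1 / (f s + A) :=
        hAnonneg (x n) θ hxn.1.le (le_of_lt (hxn.2.trans hxbθ)) le_rfl
      rw [div_le_iff₀ hd0]
      nlinarith [hTR n hn]
    · apply Tendsto.atTop_div_const hd0
      apply Tendsto.atTop_mul_const hδpos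
      exact tendsto_atTop_add_const_right atTop (-1 : ℝ)
        (tendsto_natCast_atTop_atTop.comp tendsto_id) |>.congr (by intro n; simp [sub_eq_add_neg])
  have hTLtop : Tendsto TL atTop atTop := by
    apply tendsto_atTop_mono' atTop
      (show ∀ᶠ n : ℕ in atTop, (n : ℝ) * δ / d ≤ TL n from ?_) ?_
    · filter_upwards [eventually_ge_atTop 1] with n hn
      have h1 := heqL1 n hn
      have hyn := hy n hn
      have h2 : 0 ≤ ∫ s in (y n)..θ, 1 / (f s + A) :=
        hAnonneg (y n) θ (le_trans hxb0.le hyn.1.le) hyn.2.le le_rfl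
      rw [div_le_iff₀ hd0]
      nlinarith
    · apply Tendsto.atTop_div_const hd0
      apply Tendsto.atTop_mul_const hδpos tendsto_natCast_atTop_atTop
  -- x n → xbar
  have hxlim : Tendsto x atTop (nhds xbar) := by
    rw [tendsto_order]
    constructor
    · intro a ha
      set c := max a 0 with hc
      have hc1 : c < xbar := max_lt ha hxb0
      have hc0 : 0 ≤ c := le_max_right a 0
      set M := ∫ s in (0:ℝ)..c, 1 / f s with hM
      have hItop : Tendsto (fun n => (1 - d) * TR n) atTop atTop :=
        Tendsto.const_mul_atTop (by linarith) hTRtop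
      filter_upwards [hItop.eventually_gt_atTop M, eventually_ge_atTop 1] with n hMn hn
      have hxn := hx n hn
      by_contra hcon
      push_neg at hcon
      have hxc : x n ≤ c := le_trans hcon (le_max_left a 0)
      -- then ∫₀^{x n} 1/f ≤ M
      have hsplit : M = (∫ s in (0:ℝ)..(x n), 1 / f s) + ∫ s in (x n)..c, 1 / f s := by
        rw [hM, ← intervalIntegral.integral_add_adjacent_intervals
          (hint_f 0 (x n) le_rfl hxn.1.le hxn.2) (hint_f (x n) c hxn.1.le hxc hc1)]
      have hnn : 0 ≤ ∫ s in (x n)..c, 1 / f s := by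
        apply intervalIntegral.integral_nonneg hxc
        intro u hu
        exact le_of_lt (one_div_pos.2 (hfpos u (le_trans hxn.1.le hu.1)
          (lt_of_le_of_lt hu.2 hc1)))
      rw [heqR2 n hn] at hsplit
      linarith
    · intro b hb
      filter_upwards [eventually_ge_atTop 1] with n hn
      exact lt_trans (hx n hn).2 hb
  -- y n → xbar
  have hylim : Tendsto y atTop (nhds xbar) := by
    rw [tendsto_order]
    constructor
    · intro a ha
      filter_upwards [eventually_ge_atTop 1] with n hn
      exact lt_trans ha (hy n hn).1
    · intro b hb
      set c := min b θ with hc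
      have hc1 : xbar < c := lt_min hb hxbθ
      have hc0 : c ≤ θ := min_le_right b θ
      set M := ∫ s in c..θ, 1 / (-f s) with hM
      have hItop : Tendsto (fun n => (1 - d) * TL n) atTop atTop :=
        Tendsto.const_mul_atTop (by linarith) hTLtop
      filter_upwards [hItop.eventually_gt_atTop M, eventually_ge_atTop 1] with n hMn hn
      have hyn := hy n hn
      by_contra hcon
      push_neg at hcon
      have hyc : c ≤ y n := le_trans (min_le_left b θ) hcon
      have hsplit : M = (∫ s in c..(y n), 1 / (-f s)) + ∫ s in (y n)..θ, 1 / (-f s) := by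
        rw [hM, ← intervalIntegral.integral_add_adjacent_intervals
          (hint_nf c (y n) hc1 hyc hyn.2.le) (hint_nf (y n) θ hyn.1 hyn.2.le le_rfl)]
      have hnn : 0 ≤ ∫ s in c..(y n), 1 / (-f s) := by
        apply intervalIntegral.integral_nonneg hyc
        intro u hu
        have := hfneg u (lt_of_lt_of_le hc1 hu.1) (le_trans hu.2 hyn.2.le)
        exact le_of_lt (one_div_pos.2 (by linarith))
      rw [heqL2 n hn] at hsplit
      linarith
  -- the middle integrals tend to 0
  have hmid1 : Tendsto (fun n => ∫ s in (x n)..(y n), 1 / (f s + A)) atTop (nhds 0) := by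
    have hdiff : Tendsto (fun n => C * (y n - x n)) atTop (nhds 0) := by
      have := (hylim.sub hxlim).const_mul C
      simpa using this
    apply tendsto_of_tendsto_of_tendsto_of_le_of_le' tendsto_const_nhds hdiff
    · filter_upwards [eventually_ge_atTop 1] with n hn
      have hxn := hx n hn; have hyn := hy n hn
      exact hAnonneg (x n) (y n) hxn.1.le (le_of_lt (hxn.2.trans hyn.1)) hyn.2.le
    · filter_upwards [eventually_ge_atTop 1] with n hn
      have hxn := hx n hn; have hyn := hy n hn
      exact hAub (x n) (y n) hxn.1.le (le_of_lt (hxn.2.trans hyn.1)) hyn.2.le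
  have hmid2 : Tendsto (fun n => ∫ s in (x (n+1))..(y n), 1 / (f s + A)) atTop (nhds 0) := by
    have hx' : Tendsto (fun n => x (n+1)) atTop (nhds xbar) :=
      hxlim.comp (tendsto_add_atTop_nat 1)
    have hdiff : Tendsto (fun n => C * (y n - x (n+1))) atTop (nhds 0) := by
      have := (hylim.sub hx').const_mul C
      simpa using this
    apply tendsto_of_tendsto_of_tendsto_of_le_of_le' tendsto_const_nhds hdiff
    · filter_upwards [eventually_ge_atTop 1] with n hn
      have hxn := hx (n+1) (by omega); have hyn := hy n hn
      exact hAnonneg (x (n+1)) (y n) hxn.1.le (le_of_lt (hxn.2.trans hyn.1)) hyn.2.le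
    · filter_upwards [eventually_ge_atTop 1] with n hn
      have hxn := hx (n+1) (by omega); have hyn := hy n hn
      exact hAub (x (n+1)) (y n) hxn.1.le (le_of_lt (hxn.2.trans hyn.1)) hyn.2.le
  constructor
  · -- TL n - TR n → δ / d
    have key : (fun n => δ / d - (∫ s in (x n)..(y n), 1 / (f s + A)) / d)
        =ᶠ[atTop] fun n => TL n - TR n := by
      filter_upwards [eventually_ge_atTop 1] with n hn
      have h1 := heqR1 n hn
      have h2 := heqL1 n hn
      have hxn := hx n hn; have hyn := hy n hn
      have hsplit : (∫ s in (x n)..θ, 1 / (f s + A))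
          = (∫ s in (x n)..(y n), 1 / (f s + A)) + ∫ s in (y n)..θ, 1 / (f s + A) :=
        (intervalIntegral.integral_add_adjacent_intervals
          (hintA (x n) (y n) hxn.1.le (le_of_lt (hxn.2.trans hyn.1)) hyn.2.le)
          (hintA (y n) θ (le_trans hxb0.le hyn.1.le) hyn.2.le le_rfl)).symm
      have hdd : d * (TL n - TR n) = δ - ∫ s in (x n)..(y n), 1 / (f s + A) := by
        rw [hsplit] at h1
        ring_nf
        ring_nf at h1 h2
        linarith
      field_simp
      linarith [hdd]
    apply Tendsto.congr' key
    have : Tendsto (fun n => δ / d - (∫ s in (x n)..(y n), 1 / (f s + A)) / d) atTop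
        (nhds (δ / d - 0 / d)) := tendsto_const_nhds.sub (hmid1.div_const d)
    simpa using this
  · -- TR (n+1) - TL n → 0
    have key : (fun n => (∫ s in (x (n+1))..(y n), 1 / (f s + A)) / d)
        =ᶠ[atTop] fun n => TR (n+1) - TL n := by
      filter_upwards [eventually_ge_atTop 1] with n hn
      have h1 := heqR1 (n+1) (by omega)
      have h2 := heqL1 n hn
      have hxn := hx (n+1) (by omega); have hyn := hy n hn
      have hsplit : (∫ s in (x (n+1))..θ, 1 / (f s + A))
          = (∫ s in (x (n+1))..(y n), 1 / (f s + A)) + ∫ s in (y n)..θ, 1 / (f s + A) :=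
        (intervalIntegral.integral_add_adjacent_intervals
          (hintA (x (n+1)) (y n) hxn.1.le (le_of_lt (hxn.2.trans hyn.1)) hyn.2.le)
          (hintA (y n) θ (le_trans hxb0.le hyn.1.le) hyn.2.le le_rfl)).symm
      have hcast : ((n + 1 : ℕ) : ℝ) - 1 = (n : ℝ) := by push_cast; ring
      rw [hcast, hsplit] at h1
      have hdd : d * (TR (n+1) - TL n) = ∫ s in (x (n+1))..(y n), 1 / (f s + A) := by
        linarith
      field_simp
      linarith [hdd]
    apply Tendsto.congr' key
    simpa using hmid2.div_const d
end

section
/- Let θ > 0 and f : ℝ → ℝ be C¹ on [0,θ] with f'(x) < 0 on [0,θ] and f(0) > 0 > f(θ); let x̄ ∈ (0,θ) be the unique zero of f, fix d ∈ (0,1) and A > Q_c := −f(θ), and set δ := ∫₀^θ dx/(f(x)+A). Suppose for each integer n ≥ 1 there are x_n ∈ (0, x̄) and T_n^R > 0 satisfying ∫_{x_n}^θ dx/(f(x)+A) + (n−1)·δ = d·T_n^R and ∫₀^{x_n} dx/f(x) = (1−d)·T_n^R. Then n/T_n^R → d/δ as n → ∞. -/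
/-!
Since `f` decreases on `[0, θ]` and `f θ + A > 0`, the integrand `1 / (f + A)` is positive there,
so the passage time from `x n` to `θ` lies between `0` and `δ > 0`. The first border-collision
equation then reads `d * TR n = n * δ + O(1)`, whence `n / TR n → d / δ`.
-/

open Set Filter Topology intervalIntegral MeasureTheory

theorem antitoneOn_Icc_of_hasDerivAt_nonpos {f f' : ℝ → ℝ} {a b : ℝ}
    (hderiv : ∀ s ∈ Icc a b, HasDerivAt f (f' s) s) (hf' : ∀ s ∈ Icc a b, f' s ≤ 0) :
    AntitoneOn f (Icc a b) :=
  antitoneOn_of_hasDerivWithinAt_nonpos (convex_Icc a b)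
    (fun s hs => (hderiv s hs).continuousAt.continuousWithinAt)
    (fun s hs => (hderiv s (interior_subset hs)).hasDerivWithinAt)
    (fun s hs => hf' s (interior_subset hs))

theorem integral_mem_Icc_of_nonneg_of_mem_Icc {g : ℝ → ℝ} {a b c : ℝ}
    (hg : IntervalIntegrable g volume a b) (hg₀ : ∀ s ∈ Icc a b, 0 ≤ g s) (hc : c ∈ Icc a b) :
    ∫ s in c..b, g s ∈ Icc 0 (∫ s in a..b, g s) :=
  ⟨integral_nonneg hc.2 fun s hs => hg₀ s ⟨hc.1.trans hs.1, hs.2⟩,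
    integral_mono_interval hc.1 hc.2 le_rfl
      ((ae_restrict_mem measurableSet_Ioc).mono fun s hs => hg₀ s (Ioc_subset_Icc_self hs)) hg⟩

theorem tendsto_div_natCast_of_abs_sub_le {a : ℕ → ℝ} {δ C : ℝ}
    (h : ∀ᶠ n : ℕ in atTop, |a n - n * δ| ≤ C) :
    Tendsto (fun n : ℕ => a n / n) atTop (𝓝 δ) := by
  rw [tendsto_iff_norm_sub_tendsto_zero]
  refine squeeze_zero' (Eventually.of_forall fun _ => norm_nonneg _) ?_
    (tendsto_const_div_atTop_nhds_zero_nat C)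
  filter_upwards [h, eventually_ge_atTop 1] with n hle hn
  have hn₀ : (0 : ℝ) < n := by exact_mod_cast hn
  calc ‖a n / n - δ‖ = |a n - n * δ| / n := by
        rw [Real.norm_eq_abs, ← abs_of_pos hn₀, ← abs_div, abs_of_pos hn₀]
        congr 1
        field_simp
    _ ≤ C / n := by gcongr

theorem tendsto_natCast_div_of_tendsto_mul_div {T : ℕ → ℝ} {d δ : ℝ} (hδ : δ ≠ 0)
    (h : Tendsto (fun n : ℕ => d * T n / n) atTop (𝓝 δ)) :
    Tendsto (fun n : ℕ => n / T n) atTop (𝓝 (d / δ)) := by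
  refine (tendsto_const_nhds.div h hδ).congr' ?_
  filter_upwards [h.eventually_ne hδ] with n hn
  have hd : d ≠ 0 := by rintro rfl; simp at hn
  have hT : T n ≠ 0 := by rintro hT; simp [hT] at hn
  have hn₀ : (n : ℝ) ≠ 0 := by rintro h₀; simp [h₀] at hn
  change d / (d * T n / n) = n / T n
  field_simp

theorem firing_rate_limit_large_T_general (θ d A : ℝ) (f f' : ℝ → ℝ) (xbar : ℝ)
    (x TR : ℕ → ℝ)
    (hderiv : ∀ s ∈ Set.Icc 0 θ, HasDerivAt f (f' s) s)
    (hf'_neg : ∀ s ∈ Set.Icc 0 θ, f' s < 0)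
    (hxbar : xbar ∈ Set.Ioo 0 θ)
    (hA : -f θ < A)
    (hx : ∀ n ≥ 1, x n ∈ Set.Ioo 0 xbar)
    (heqR1 : ∀ n ≥ 1, (∫ s in (x n)..θ, 1 / (f s + A))
      + ((n : ℝ) - 1) * (∫ s in (0:ℝ)..θ, 1 / (f s + A)) = d * TR n) :
    Filter.Tendsto (fun (n : ℕ) => (n : ℝ) / TR n) Filter.atTop
      (nhds (d / ∫ s in (0:ℝ)..θ, 1 / (f s + A))) := by
  set δ := ∫ s in (0:ℝ)..θ, 1 / (f s + A)
  have hθ : 0 < θ := hxbar.1.trans hxbar.2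
  have hf_add_pos : ∀ s ∈ Icc 0 θ, 0 < f s + A := fun s hs => by
    have := antitoneOn_Icc_of_hasDerivAt_nonpos hderiv (fun s hs => (hf'_neg s hs).le) hs
      (right_mem_Icc.2 hθ.le) hs.2
    linarith
  have hf_cont : ContinuousOn f (Icc 0 θ) := fun s hs =>
    (hderiv s hs).continuousAt.continuousWithinAt
  have hint : IntervalIntegrable (fun s => 1 / (f s + A)) volume 0 θ :=
    (continuousOn_const.div (hf_cont.add continuousOn_const) fun s hs =>
      (hf_add_pos s hs).ne').intervalIntegrable_of_Icc hθ.le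
  have hδ : 0 < δ := intervalIntegral_pos_of_pos_on hint
    (fun s hs => one_div_pos.2 (hf_add_pos s (Ioo_subset_Icc_self hs))) hθ
  refine tendsto_natCast_div_of_tendsto_mul_div hδ.ne'
    (tendsto_div_natCast_of_abs_sub_le (C := δ) ?_)
  filter_upwards [eventually_ge_atTop 1] with n hn
  have hI := integral_mem_Icc_of_nonneg_of_mem_Icc hint
    (fun s hs => (one_div_pos.2 (hf_add_pos s hs)).le)
    ⟨(hx n hn).1.le, (hx n hn).2.le.trans hxbar.2.le⟩
  rw [← heqR1 n hn, abs_le]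
  constructor <;> linarith [hI.1, hI.2]

/-- Firing-rate limit along the right border-collision periods (Proposition 4): with
δ = ∫₀^θ dx/(f(x)+A), the firing-rates n/T_n^R tend to d/δ as n → ∞. -/
theorem firing_rate_limit_large_T (θ d A : ℝ) (f f' : ℝ → ℝ) (xbar : ℝ)
    (x TR : ℕ → ℝ)
    (hθ : 0 < θ)
    (hderiv : ∀ s ∈ Set.Icc 0 θ, HasDerivAt f (f' s) s)
    (hf'_cont : ContinuousOn f' (Set.Icc 0 θ))
    (hf'_neg : ∀ s ∈ Set.Icc 0 θ, f' s < 0)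
    (hf0 : 0 < f 0) (hfθ : f θ < 0)
    (hxbar : xbar ∈ Set.Ioo 0 θ) (hfxbar : f xbar = 0)
    (hd : d ∈ Set.Ioo (0:ℝ) 1) (hA : -f θ < A)
    (hx : ∀ n ≥ 1, x n ∈ Set.Ioo 0 xbar)
    (hTR : ∀ n ≥ 1, 0 < TR n)
    (heqR1 : ∀ n ≥ 1, (∫ s in (x n)..θ, 1 / (f s + A))
      + ((n : ℝ) - 1) * (∫ s in (0:ℝ)..θ, 1 / (f s + A)) = d * TR n)
    (heqR2 : ∀ n ≥ 1, (∫ s in (0:ℝ)..(x n), 1 / f s) = (1 - d) * TR n) :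
    Filter.Tendsto (fun (n : ℕ) => (n : ℝ) / TR n) Filter.atTop
      (nhds (d / ∫ s in (0:ℝ)..θ, 1 / (f s + A))) :=
  firing_rate_limit_large_T_general θ d A f f' xbar x TR hderiv hf'_neg hxbar hA hx heqR1
end

section
/- Let M, L > 0 and let f : ℝ → ℝ satisfy |f(x)| ≤ M for all x and |f(x) − f(y)| ≤ L·|x − y| for all x, y. Let A ≥ 0 and d ∈ [0,1]. Then there exists C > 0 (depending only on M, L and A) such that for every T ∈ (0,1], every x₀ ∈ ℝ, and all differentiable functions u, v, w : ℝ → ℝ with u'(t) = f(u(t)) + A for t ∈ [0, d·T] and u(0) = x₀, v'(t) = f(v(t)) for t ∈ [d·T, T] and v(d·T) = u(d·T), and w'(t) = f(w(t)) + A·d for t ∈ [0, T] and w(0) = x₀, one has |v(T) − w(T)| ≤ C·T². -/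
/-!
The forced and the averaged trajectory both start at `x₀` and move with speed at most `M + A`,
so during a period of length `T` they stay in the cone `|x - x₀| ≤ (M + A) t`. Along them the
Lipschitz field differs from its frozen value `f x₀` by at most `L (M + A) T`, so over each phase
every trajectory advances by `(f x₀ + drive) · duration` up to `L (M + A) T · duration`. The
frozen advances of the forced system, `(f x₀ + A) d T + f x₀ (1 - d) T`, and of the averaged one,
`(f x₀ + A d) T`, coincide, which leaves `2 L (M + A) T²`.
-/

open Set

variable {f g : ℝ → ℝ} {a b c : ℝ}

lemma abs_sub_sub_mul_le_of_abs_deriv_sub_le {g' : ℝ → ℝ} {ε : ℝ}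
    (hg : ∀ t ∈ Icc a b, HasDerivAt g (g' t) t) (hε : ∀ t ∈ Icc a b, |g' t - c| ≤ ε) :
    ∀ t ∈ Icc a b, |g t - g a - c * (t - a)| ≤ ε * (t - a) := by
  intro t ht
  have key := norm_image_sub_le_of_norm_deriv_le_segment' (f := fun s => g s - c * s)
    (fun s hs => (((hg s hs).sub ((hasDerivAt_id s).const_mul c)).hasDerivWithinAt).congr_deriv
      (by simp)) (fun s hs => hε s (Ico_subset_Icc_self hs)) t ht
  rw [Real.norm_eq_abs] at key
  convert key using 2
  ring

lemma abs_sub_le_of_hasDerivAt_bounded_add_const {M : ℝ} (hbound : ∀ x, |f x| ≤ M)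
    (hg : ∀ t ∈ Icc a b, HasDerivAt g (f (g t) + c) t) :
    ∀ t ∈ Icc a b, |g t - g a| ≤ (M + |c|) * (t - a) := by
  intro t ht
  simpa using abs_sub_sub_mul_le_of_abs_deriv_sub_le (c := 0) hg
    (fun s _ => by simpa using (abs_add_le _ _).trans (add_le_add_left (hbound (g s)) _)) t ht

lemma abs_sub_le_of_hasDerivAt_of_mem_cone {M K s x₀ : ℝ} (hbound : ∀ x, |f x| ≤ M)
    (hK : M + |c| ≤ K) (hg : ∀ t ∈ Icc a b, HasDerivAt g (f (g t) + c) t)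
    (ha : |g a - x₀| ≤ K * (a - s)) : ∀ t ∈ Icc a b, |g t - x₀| ≤ K * (t - s) := by
  intro t ht
  calc |g t - x₀| ≤ |g t - g a| + |g a - x₀| := abs_sub_le _ _ _
    _ ≤ K * (t - a) + K * (a - s) := by
      gcongr
      exact (abs_sub_le_of_hasDerivAt_bounded_add_const hbound hg t ht).trans
        (mul_le_mul_of_nonneg_right hK (sub_nonneg.2 ht.1))
    _ = K * (t - s) := by ring

lemma abs_sub_sub_frozen_le {L r x₀ : ℝ} (hlip : ∀ x y, |f x - f y| ≤ L * |x - y|)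
    (hL : 0 ≤ L) (hg : ∀ t ∈ Icc a b, HasDerivAt g (f (g t) + c) t)
    (hnear : ∀ t ∈ Icc a b, |g t - x₀| ≤ r) (hab : a ≤ b) :
    |g b - g a - (f x₀ + c) * (b - a)| ≤ L * r * (b - a) := by
  refine abs_sub_sub_mul_le_of_abs_deriv_sub_le hg (fun t ht => ?_) b (right_mem_Icc.2 hab)
  calc |f (g t) + c - (f x₀ + c)| = |f (g t) - f x₀| := by ring_nf
    _ ≤ L * |g t - x₀| := hlip _ _
    _ ≤ L * r := mul_le_mul_of_nonneg_left (hnear t ht) hL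

/-- One-period averaging estimate (proof of Proposition 6): the time-T map of the
square-wave forced system (pulse phase with drive A on [0,dT], free phase on [dT,T])
differs from the time-T map of the averaged system ẋ = f(x) + A·d by at most C·T²,
uniformly in the initial condition, for T ∈ (0,1]. -/
theorem one_period_averaging_estimate (M L A d : ℝ) (f : ℝ → ℝ)
    (hM : 0 < M) (hL : 0 < L)
    (hbound : ∀ x, |f x| ≤ M)
    (hlip : ∀ x y, |f x - f y| ≤ L * |x - y|)
    (hA : 0 ≤ A) (hd : d ∈ Set.Icc (0:ℝ) 1) :
    ∃ C > 0, ∀ T ∈ Set.Ioc (0:ℝ) 1, ∀ x₀ : ℝ, ∀ u v w : ℝ → ℝ,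
      (∀ t ∈ Set.Icc 0 (d * T), HasDerivAt u (f (u t) + A) t) → u 0 = x₀ →
      (∀ t ∈ Set.Icc (d * T) T, HasDerivAt v (f (v t)) t) → v (d * T) = u (d * T) →
      (∀ t ∈ Set.Icc 0 T, HasDerivAt w (f (w t) + A * d) t) → w 0 = x₀ →
      |v T - w T| ≤ C * T ^ 2 := by
  obtain ⟨hd0, hd1⟩ := hd
  refine ⟨2 * L * (M + A), by positivity, ?_⟩
  rintro T ⟨hT0, -⟩ x₀ u v w hu hu0 hv hvu hw hw0
  have hdT : 0 ≤ d * T := by positivity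
  have hdTT : d * T ≤ T := mul_le_of_le_one_left hT0.le hd1
  have hv' : ∀ t ∈ Icc (d * T) T, HasDerivAt v (f (v t) + 0) t := by simpa using hv
  have hK : 0 ≤ M + A := by positivity
  have hu_cone := abs_sub_le_of_hasDerivAt_of_mem_cone (K := M + A) (s := 0) (x₀ := x₀) hbound
    (by rw [abs_of_nonneg hA]) hu (by simp [hu0])
  have hv_cone := abs_sub_le_of_hasDerivAt_of_mem_cone (K := M + A) hbound (by simpa using hA) hv'
    (by rw [hvu]; exact hu_cone _ (right_mem_Icc.2 hdT))
  have hw_cone := abs_sub_le_of_hasDerivAt_of_mem_cone (K := M + A) (s := 0) (x₀ := x₀) hbound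
    (by rw [abs_of_nonneg (mul_nonneg hA hd0)]; linarith [mul_le_of_le_one_right hA hd1]) hw (by simp [hw0])
  have hcone_le {t : ℝ} (ht : t ≤ T) : (M + A) * (t - 0) ≤ (M + A) * T :=
    mul_le_mul_of_nonneg_left (by linarith) hK
  have hu_adv := abs_sub_sub_frozen_le hlip hL.le hu
    (fun t ht => (hu_cone t ht).trans (hcone_le (ht.2.trans hdTT))) hdT
  have hv_adv := abs_sub_sub_frozen_le hlip hL.le hv'
    (fun t ht => (hv_cone t ht).trans (hcone_le ht.2)) hdTT
  have hw_adv := abs_sub_sub_frozen_le hlip hL.le hw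
    (fun t ht => (hw_cone t ht).trans (hcone_le ht.2)) hT0.le
  calc |v T - w T|
      ≤ L * ((M + A) * T) * (d * T - 0) + L * ((M + A) * T) * (T - d * T)
        + L * ((M + A) * T) * (T - 0) := by
        obtain ⟨hu₁, hu₂⟩ := abs_le.1 hu_adv
        obtain ⟨hv₁, hv₂⟩ := abs_le.1 hv_adv
        obtain ⟨hw₁, hw₂⟩ := abs_le.1 hw_adv
        exact abs_le.2 ⟨by linarith, by linarith⟩
    _ = 2 * L * (M + A) * T ^ 2 := by ring
end
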